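/- arXiv:1101.5071 — 6 statements merged into one kernel-verified Lean document; each statement's English description precedes it below -/
import Mathlib

section
/- For a strict partition λ = (a₁ > a₂ > ... > a_m > 0) of n, the total number of bar lengths (counted with multiplicity) equals n, i.e. the multiset B(λ) = ⋃_i ({1,...,a_i} ∪ {a_i + a_j : j > i} \ {a_i - a_j : j > i}) has cardinality n. -/
/-!
Row `i` of `B(λ)` contributes `aᵢ + (m - 1 - i)` lengths before the subtraction. Since
`aᵢ > aⱼ` for `j > i`, the `m - 1 - i` differences `aᵢ - aⱼ` are distinct elements of
`{1, …, aᵢ}`, so the multiset difference removes exactly that many, leaving `Σ aᵢ = n`.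
-/

namespace BarPartitions

/-- A strict (bar) partition given as a strictly decreasing list of positive integers. -/
def IsStrictList (l : List ℕ) : Prop := l.Chain' (· > ·) ∧ ∀ a ∈ l, 0 < a

/-- The multiset of bar lengths of a strict partition `l = (a₁ > ... > a_m)`:
`⋃ᵢ ({1,…,aᵢ} ∪ {aᵢ + aⱼ : j > i}) \ {aᵢ - aⱼ : j > i}` as multisets. -/
def barMultisetL (l : List ℕ) : Multiset ℕ :=
  ((List.range l.length).map (fun i =>
      ((Multiset.range (l.getD i 0)).map (· + 1))
      + ((l.drop (i + 1)).map (fun b => l.getD i 0 + b) : Multiset ℕ))).sum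
  - ((List.range l.length).map (fun i =>
      ((l.drop (i + 1)).map (fun b => l.getD i 0 - b) : Multiset ℕ))).sum

/-- The doubled partition `D(λ)` with Frobenius coordinates `(a₁,…,a_m | a₁-1,…,a_m-1)`:
row `i` (0-indexed, `i < m`) has `aᵢ + i + 1` cells; the remaining rows are given by the
column lengths `c + a_c` (0-indexed column `c < m`). -/
def doubledP (l : List ℕ) : List ℕ :=
  (List.range l.length).map (fun i => l.getD i 0 + i + 1) ++
  (List.range (l.headD 0 - l.length)).map (fun k =>
    ((List.range l.length).filter (fun c => l.length + k + 1 ≤ c + l.getD c 0)).length)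

/-- Length of column `c` of the Young diagram of the partition `μ` (list of parts). -/
def colLen (μ : List ℕ) (c : ℕ) : ℕ := (μ.filter (fun p => c < p)).length

/-- Hook length of the cell `(r, c)` (0-indexed) of the partition `μ`. -/
def hookLen (μ : List ℕ) (r c : ℕ) : ℕ := (μ.getD r 0 - c) + (colLen μ c - r) - 1

/-- The multiset of hook lengths of the partition `μ`. -/
def hookLengths (μ : List ℕ) : Multiset ℕ :=
  ((List.range μ.length).map (fun r =>
    ((Multiset.range (μ.getD r 0)).map (fun c => hookLen μ r c)))).sum

/-- d-residue of the hand node of any hook in row `r` of `μ`. -/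
def handRes (d : ℕ) (μ : List ℕ) (r : ℕ) : ZMod d :=
  (((μ.getD r 0 : ℤ) - 1 - (r : ℤ) : ℤ) : ZMod d)

/-- d-residue of the foot node of any hook in column `c` of `μ`. -/
def footRes (d : ℕ) (μ : List ℕ) (c : ℕ) : ZMod d :=
  (((c : ℤ) - (colLen μ c : ℤ) + 1 : ℤ) : ZMod d)

/-- The β-set of `μ` with `N` elements (first-column hook lengths, padded with `0` parts). -/
def betaList (μ : List ℕ) (N : ℕ) : List ℕ :=
  (List.range N).map (fun k => μ.getD k 0 + (N - 1 - k))

/-- The least multiple of `d` that is `≥ len`. -/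
def minMul (d len : ℕ) : ℕ := d * ((len + d - 1) / d)

/-- Number of beads on runner `i` of the minimally normalized `d`-abacus of `μ`. -/
def beadCountL (d : ℕ) (μ : List ℕ) (i : ℕ) : ℕ :=
  ((betaList μ (minMul d μ.length)).filter (fun v => v % d = i)).length

/-! ### Finset versions: a strict partition as its finite set of (positive) parts. -/

/-- The parts of a strict partition, sorted decreasingly. -/
def sortedParts (s : Finset ℕ) : List ℕ := (s.sort (· ≤ ·)).reverse

/-- Bead counts of the minimally normalized `d`-abacus of the doubled partition `D(λ)`,
where `λ` is the strict partition with part set `s` (as integers). -/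
def beadCount (d : ℕ) (s : Finset ℕ) (i : ℕ) : ℤ :=
  (beadCountL d (doubledP (sortedParts s)) i : ℤ)

/-- The multiset of bar lengths of the strict partition with (positive) part set `s`. -/
def barMultisetF (s : Finset ℕ) : Multiset ℕ :=
  s.val.bind (fun a => ((Multiset.range a).map (· + 1)).filter (fun h => a - h ∉ s))
  + s.val.bind (fun a => (s.filter (fun b => b < a)).val.map (fun b => a + b))

/-- Removal of one bar of length `h` from the strict partition `s`, yielding `t`:
either remove two parts `a ≠ b` with `a + b = h`, or replace a part `a` by `a - h`
(deleting it when `h = a`), provided `a - h` is not already a part. -/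
def RemoveBarLen (h : ℕ) (s t : Finset ℕ) : Prop :=
  (∃ a ∈ s, ∃ b ∈ s, a ≠ b ∧ h = a + b ∧ t = (s.erase a).erase b) ∨
  (∃ a ∈ s, 0 < h ∧ h ≤ a ∧ a - h ∉ s ∧
    t = if h = a then s.erase a else insert (a - h) (s.erase a))

/-- Removal of one bar of length divisible by `d`. -/
def RemoveDBar (d : ℕ) (s t : Finset ℕ) : Prop := ∃ h, d ∣ h ∧ RemoveBarLen h s t

/-- `c` is the `d̄`-core of `s`: obtained from `s` by removing bars of length divisible
by `d`, and admitting no further such removal. -/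
def IsBarCore (d : ℕ) (s c : Finset ℕ) : Prop :=
  Relation.ReflTransGen (RemoveDBar d) s c ∧ ∀ t, ¬ RemoveDBar d c t

/-- The partition (multiset of positive parts) associated to a β-set `X`. -/
def partitionOfBetaSet (X : Finset ℕ) : Multiset ℕ :=
  (((X.sort (· ≤ ·)).zipIdx.map (fun p => p.1 - p.2) : List ℕ) : Multiset ℕ).filter (fun v => 0 < v)

/-- Positions of the parts of `s` lying on runner `i` of the `d`-abacus. -/
def runnerSet (d i : ℕ) (s : Finset ℕ) : Finset ℕ :=
  (s.filter (fun a => a % d = i)).image (fun a => a / d)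

/-- The `i`-th component (`1 ≤ i ≤ (d-1)/2`) of the `d̄`-quotient of `s`: the partition
determined by the pair of runners `(i, d - i)` via the associated charged β-set. -/
def barQuotComp (d i : ℕ) (s : Finset ℕ) : Multiset ℕ :=
  let A := runnerSet d i s
  let B := runnerSet d (d - i) s
  let N := B.sup id + 1
  partitionOfBetaSet
    ((A.image (fun a => N + a)) ∪ ((Finset.range N).filter (fun b => b ∉ B)).image (fun b => N - 1 - b))

/-- Two strict partitions have the same `d̄`-quotient. -/
def SameBarQuotient (d : ℕ) (s t : Finset ℕ) : Prop :=
  runnerSet d 0 s = runnerSet d 0 t ∧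
  ∀ i, 1 ≤ i → i ≤ (d - 1) / 2 → barQuotComp d i s = barQuotComp d i t

/-- `q` is the `d̄`-quotient partition of `s`: the unique strict partition with empty
`d̄`-core and the same `d̄`-quotient as `s`. -/
def IsBarQuotientPartition (d : ℕ) (s q : Finset ℕ) : Prop :=
  IsBarCore d q ∅ ∧ SameBarQuotient d s q

/-- The set of modified part lengths: a part `p ≡ i (mod d)` is modified to
`|p + d(xᵢ - x₀)|`. -/
def modParts (d : ℕ) (x : ℕ → ℤ) (q : Finset ℕ) : Finset ℕ :=
  q.image (fun (p : ℕ) => ((p : ℤ) + (d : ℤ) * (x (p % d) - x 0)).natAbs)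

/-- The multiset of modified bar lengths: a bar of length `h` corresponding to a bead
on runner `i` and an empty spot on runner `j` is modified to `|h + d(xᵢ - xⱼ)|`. -/
def modBarLengths (d : ℕ) (x : ℕ → ℤ) (q : Finset ℕ) : Multiset ℕ :=
  q.val.bind (fun a =>
    (((Multiset.range a).map (· + 1)).filter (fun h => a - h ∉ q)).map
      (fun (h : ℕ) => ((h : ℤ) + (d : ℤ) * (x (a % d) - x ((a - h) % d))).natAbs))
  + q.val.bind (fun a =>
      (q.filter (fun b => b < a)).val.map
        (fun (b : ℕ) => (((a : ℤ) + (b : ℤ)) + (d : ℤ) * (x (a % d) - x ((d - b % d) % d))).natAbs))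

end BarPartitions

theorem List.map_getD_range_length {α : Type*} (l : List α) (d : α) :
    (List.range l.length).map (l.getD · d) = l :=
  List.ext_getElem (by simp) fun i _ hi => by simp [hi]

theorem List.Pairwise.rel_getD_of_mem_drop {α : Type*} {R : α → α → Prop} {l : List α}
    (h : l.Pairwise R) {i : ℕ} (hi : i < l.length) (d : α) {b : α} (hb : b ∈ l.drop (i + 1)) :
    R (l.getD i d) b := by
  have hdrop := h.drop (i := i)
  rw [List.drop_eq_getElem_cons hi, List.pairwise_cons] at hdrop
  rw [List.getD_eq_getElem l d hi]
  exact hdrop.1 b hb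

theorem Multiset.card_list_sum {α : Type*} (L : List (Multiset α)) :
    Multiset.card L.sum = (L.map Multiset.card).sum :=
  map_list_sum Multiset.cardHom L

theorem Multiset.map_tsub_le_map_succ_range {s : Multiset ℕ} (hs : s.Nodup) {a : ℕ}
    (hlt : ∀ b ∈ s, b < a) : s.map (a - ·) ≤ (Multiset.range a).map (· + 1) := by
  have hinj : Set.InjOn (a - ·) {b | b ∈ s} := fun b hb c hc (h : a - b = a - c) => by
    have := hlt b hb; have := hlt c hc; omega
  rw [Multiset.le_iff_subset (Multiset.Nodup.map_on hinj hs)]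
  intro x hx
  obtain ⟨b, hb, rfl⟩ := Multiset.mem_map.mp hx
  have hba := hlt b hb
  exact Multiset.mem_map.mpr ⟨a - b - 1, Multiset.mem_range.mpr (by omega), by omega⟩

namespace BarPartitions

theorem IsStrictList.pairwise {l : List ℕ} (hl : IsStrictList l) : l.Pairwise (· > ·) :=
  List.isChain_iff_pairwise.mp hl.1

theorem IsStrictList.map_tsub_drop_le_map_succ_range {l : List ℕ} (hl : IsStrictList l) {i : ℕ}
    (hi : i < l.length) :
    ((l.drop (i + 1)).map (fun b => l.getD i 0 - b) : Multiset ℕ) ≤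
      (Multiset.range (l.getD i 0)).map (· + 1) := by
  have hnd : (l.drop (i + 1)).Nodup := (hl.pairwise.imp ne_of_gt).sublist (List.drop_sublist _ _)
  rw [← Multiset.map_coe]
  exact Multiset.map_tsub_le_map_succ_range (Multiset.coe_nodup.mpr hnd)
    fun b hb => hl.pairwise.rel_getD_of_mem_drop hi 0 hb

/-- the multiset of bar lengths of a strict partition of `n` has cardinality `n`. -/
theorem card_barMultiset (n : ℕ) (l : List ℕ) (hl : IsStrictList l) (hn : l.sum = n) :
    Multiset.card (barMultisetL l) = n := by
  have hle := List.sum_le_sum fun i hi =>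
    (hl.map_tsub_drop_le_map_succ_range (List.mem_range.mp hi)).trans (Multiset.le_add_right _
      ((l.drop (i + 1)).map (fun b => l.getD i 0 + b) : Multiset ℕ))
  rw [barMultisetL, Multiset.card_sub hle, Multiset.card_list_sum, Multiset.card_list_sum]
  simp only [List.map_map, Function.comp_def, Multiset.card_add,
    Multiset.card_map, Multiset.card_range, Multiset.coe_card, List.length_map, List.sum_map_add,
    List.map_getD_range_length, hn]
  omega

end BarPartitions
end

section
/- Let λ = (a₁ > ... > a_m > 0) be a strict partition and D(λ) its doubled partition. Then the multiset of hook lengths of D(λ) is H(D(λ)) = P(λ) ∪ DP(λ) ∪ B₀(λ) ∪ B₀(λ), where P(λ) = {a₁,...,a_m}, DP(λ) = {2a₁,...,2a_m}, and B₀(λ) is the multiset of bar lengths of λ that are not parts (so that the multiset B(λ) of bar lengths of λ is P(λ) ∪ B₀(λ)). -/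
namespace BarPartitions

/-- counting function: number of indices `i < t.length` with `x ≤ t_i + i`. -/
def uC (t : List ℕ) (x : ℕ) : ℕ :=
  ((List.range t.length).filter (fun i => x ≤ t.getD i 0 + i)).length

lemma isStrict_tail {a : ℕ} {t : List ℕ} (h : IsStrictList (a :: t)) : IsStrictList t :=
  ⟨h.1.tail, fun b hb => h.2 b (List.mem_cons_of_mem _ hb)⟩

lemma strict_adj {t : List ℕ} (h : IsStrictList t) {i : ℕ} (hi : i + 1 < t.length) :
    t.getD (i+1) 0 < t.getD i 0 := by
  have := List.isChain_iff_getElem.1 h.1 i (by omega)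
  rw [List.getD_eq_getElem _ _ (show i < t.length by omega), List.getD_eq_getElem _ _ hi]
  exact this

lemma strict_decr {t : List ℕ} (h : IsStrictList t) {i j : ℕ} (hij : i ≤ j) (hj : j < t.length) :
    t.getD j 0 + j ≤ t.getD i 0 + i := by
  induction j with
  | zero => have : i = 0 := by omega
            subst this; rfl
  | succ j ihj =>
    rcases Nat.eq_or_lt_of_le hij with rfl | hlt
    · exact le_rfl
    · have h1 := strict_adj h (i := j) hj
      have h2 := ihj (by omega) (by omega)
      omega

lemma strict_pos {t : List ℕ} (h : IsStrictList t) {i : ℕ} (hi : i < t.length) :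
    0 < t.getD i 0 := by
  rw [List.getD_eq_getElem _ _ hi]
  exact h.2 _ (List.getElem_mem hi)

lemma strict_low {t : List ℕ} (h : IsStrictList t) {i : ℕ} (hi : i < t.length) :
    t.length ≤ t.getD i 0 + i := by
  have h1 := strict_decr h (i := i) (j := t.length - 1) (by omega) (by omega)
  have h2 := strict_pos h (i := t.length - 1) (by omega)
  omega

lemma headD_eq_getD (t : List ℕ) : t.headD 0 = t.getD 0 0 := by cases t <;> rfl

lemma strict_head {t : List ℕ} (h : IsStrictList t) {i : ℕ} (hi : i < t.length) :
    t.getD i 0 + i ≤ t.headD 0 := by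
  rw [headD_eq_getD]
  simpa using strict_decr h (i := 0) (j := i) (by omega) hi

lemma len_le_head {t : List ℕ} (h : IsStrictList t) : t.length ≤ t.headD 0 := by
  rcases t with - | ⟨b, t'⟩
  · simp
  · simpa [headD_eq_getD] using strict_low h (i := 0) (by simp)

lemma strict_lt_head {a : ℕ} {t : List ℕ} (h : IsStrictList (a :: t)) : ∀ b ∈ t, b < a := by
  intro b hb
  obtain ⟨i, hi, rfl⟩ := List.mem_iff_getElem.1 hb
  have := strict_decr h (i := 0) (j := i+1) (by omega) (by simpa using hi)
  simp only [List.getD_cons_succ, List.getD_cons_zero] at this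
  rw [List.getD_eq_getElem _ _ hi] at this
  omega

lemma uC_le (t : List ℕ) (x : ℕ) : uC t x ≤ t.length := by
  simpa [uC] using List.length_filter_le _ (List.range t.length)

lemma uC_all {t : List ℕ} (h : IsStrictList t) {x : ℕ} (hx : x ≤ t.length) :
    uC t x = t.length := by
  rw [uC, ← List.countP_eq_length_filter]
  rw [List.countP_eq_length.2 ?_]
  · simp
  · intro i hi
    simp only [List.mem_range] at hi
    have := strict_low h hi
    simp only [decide_eq_true_eq]
    omega

lemma uC_zero {t : List ℕ} (h : IsStrictList t) {x : ℕ} (hx : t.headD 0 < x) :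
    uC t x = 0 := by
  rw [uC, ← List.countP_eq_length_filter, List.countP_eq_zero.2 ?_]
  intro i hi
  simp only [List.mem_range] at hi
  have := strict_head h hi
  simp only [decide_eq_true_eq]
  omega

lemma filter_range_length_eq (n : ℕ) (p : ℕ → Bool) :
    ((List.range n).filter p).length = ((Finset.range n).filter (fun i => p i = true)).card := by
  rw [Finset.card, Finset.filter_val, Finset.range_val, ← Multiset.coe_range,
    Multiset.filter_coe, Multiset.coe_card]
  congr 1
  apply List.filter_congr
  intro x _
  simp

lemma uC_gt_iff {t : List ℕ} (h : IsStrictList t) {c x : ℕ} (hc : c < t.length) :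
    c < uC t x ↔ x ≤ t.getD c 0 + c := by
  rw [uC, filter_range_length_eq]
  constructor
  · intro hcard
    by_contra hx
    push_neg at hx
    have hsub : ((Finset.range t.length).filter
        (fun i => (decide (x ≤ t.getD i 0 + i)) = true)) ⊆ Finset.range c := by
      intro i hi
      simp only [Finset.mem_filter, Finset.mem_range, decide_eq_true_eq] at hi
      simp only [Finset.mem_range]
      by_contra hic
      push_neg at hic
      have := strict_decr h hic hi.1
      omega
    have := Finset.card_le_card hsub
    simp only [Finset.card_range] at this
    omega
  · intro hx
    have hsub : Finset.range (c+1) ⊆ ((Finset.range t.length).filter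
        (fun i => (decide (x ≤ t.getD i 0 + i)) = true)) := by
      intro i hi
      simp only [Finset.mem_range] at hi
      simp only [Finset.mem_filter, Finset.mem_range, decide_eq_true_eq]
      refine ⟨by omega, ?_⟩
      have := strict_decr h (i := i) (j := c) (by omega) hc
      omega
    have := Finset.card_le_card hsub
    simp only [Finset.card_range] at this
    omega

lemma uC_cons (b : ℕ) (t : List ℕ) {x : ℕ} (hx : 1 ≤ x) :
    uC (b :: t) x = (if x ≤ b then 1 else 0) + uC t (x - 1) := by
  rw [uC, uC, ← List.countP_eq_length_filter, ← List.countP_eq_length_filter]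
  rw [List.length_cons, List.range_succ_eq_map, List.countP_cons, List.countP_map]
  have : ((fun i => decide (x ≤ (b :: t).getD i 0 + i)) ∘ Nat.succ)
      = (fun i => decide (x - 1 ≤ t.getD i 0 + i)) := by
    funext i
    simp only [Function.comp_apply, List.getD_cons_succ, decide_eq_decide]
    omega
  rw [this]
  simp only [List.getD_cons_zero, decide_eq_true_eq]
  have : (x ≤ b + 0) ↔ (x ≤ b) := by omega
  rcases le_or_gt x b with hxb | hxb <;> simp [hxb] <;> omega


lemma getD_range_map {n r : ℕ} (f : ℕ → ℕ) (h : r < n) :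
    ((List.range n).map f).getD r 0 = f r := by
  rw [List.getD_eq_getElem _ _ (by simpa using h)]
  simp

lemma length_doubledP {t : List ℕ} (h : IsStrictList t) :
    (doubledP t).length = t.headD 0 := by
  have := len_le_head h
  simp only [doubledP, List.length_append, List.length_map, List.length_range]
  omega

/-- second block entries of doubledP, rewritten through `uC`. -/
lemma doubledP_snd_eq (t : List ℕ) (k : ℕ) :
    ((List.range t.length).filter (fun c => t.length + k + 1 ≤ c + t.getD c 0)).length
      = uC t (t.length + k + 1) := by
  rw [uC]
  congr 1
  apply List.filter_congr
  intro i _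
  simp only [decide_eq_decide]
  omega

lemma getD_doubledP_lt {t : List ℕ} (h : IsStrictList t) {r : ℕ} (hr : r < t.length) :
    (doubledP t).getD r 0 = t.getD r 0 + r + 1 := by
  rw [doubledP, List.getD_append _ _ _ _ (by simpa using hr), getD_range_map _ hr]

lemma getD_doubledP_ge {t : List ℕ} (h : IsStrictList t) {r : ℕ}
    (hr : t.length ≤ r) (hr2 : r < t.headD 0) :
    (doubledP t).getD r 0 = uC t (r + 1) := by
  rw [doubledP, List.getD_append_right _ _ _ _ (by simpa using hr)]
  simp only [List.length_map, List.length_range]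
  rw [getD_range_map _ (by omega), doubledP_snd_eq]
  congr 1
  omega

lemma countP_range_lt (K n : ℕ) :
    (List.range n).countP (fun k => decide (k < K)) = min K n := by
  induction n with
  | zero => simp
  | succ n ih =>
    rw [List.range_succ, List.countP_append, ih]
    by_cases hnk : n < K <;> simp [List.countP_cons, hnk] <;> omega

lemma colLen_doubledP_lt {t : List ℕ} (h : IsStrictList t) {c : ℕ} (hc : c < t.length) :
    colLen (doubledP t) c = t.getD c 0 + c := by
  have hch := strict_head h hc
  have hcl := strict_low h hc
  rw [colLen, ← List.countP_eq_length_filter, doubledP, List.countP_append,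
    List.countP_map, List.countP_map]
  have h1 : List.countP ((fun p => decide (c < p)) ∘ fun i => t.getD i 0 + i + 1)
      (List.range t.length) = t.length := by
    rw [List.countP_eq_length.2 ?_]
    · simp
    · intro i hi
      simp only [List.mem_range] at hi
      have := strict_low h hi
      simp only [Function.comp_apply, decide_eq_true_eq]
      omega
  have h2 : List.countP ((fun p => decide (c < p)) ∘ fun k =>
      ((List.range t.length).filter (fun c' => t.length + k + 1 ≤ c' + t.getD c' 0)).length)
      (List.range (t.headD 0 - t.length)) = t.getD c 0 + c - t.length := by
    rw [List.countP_eq_length_filter,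
      List.filter_congr (q := fun k => decide (k < t.getD c 0 + c - t.length)) ?_,
      ← List.countP_eq_length_filter, countP_range_lt]
    · omega
    · intro k _
      simp only [Function.comp_apply, doubledP_snd_eq, decide_eq_decide]
      rw [uC_gt_iff h hc]
      omega
  rw [h1, h2]
  omega

lemma colLen_doubledP_ge {t : List ℕ} (h : IsStrictList t) {c : ℕ} (hc : t.length ≤ c) :
    colLen (doubledP t) c = uC t c := by
  rw [colLen, ← List.countP_eq_length_filter, doubledP, List.countP_append,
    List.countP_map, List.countP_map]
  have h2 : List.countP ((fun p => decide (c < p)) ∘ fun k =>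
      ((List.range t.length).filter (fun c' => t.length + k + 1 ≤ c' + t.getD c' 0)).length)
      (List.range (t.headD 0 - t.length)) = 0 := by
    rw [List.countP_eq_zero.2 ?_]
    intro k _
    simp only [Function.comp_apply, doubledP_snd_eq, decide_eq_true_eq]
    have := uC_le t (t.length + k + 1)
    omega
  rw [h2, uC, ← List.countP_eq_length_filter, Nat.add_zero]
  rw [List.countP_eq_length_filter, List.countP_eq_length_filter]
  congr 1
  apply List.filter_congr
  intro i _
  simp only [Function.comp_apply, decide_eq_decide]
  omega


lemma range_succ' (n : ℕ) : Multiset.range (n+1) = 0 ::ₘ (Multiset.range n).map (·+1) := by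
  have h1 : Multiset.range (n+1) = ((List.range (n+1) : List ℕ) : Multiset ℕ) :=
    (Multiset.coe_range _).symm
  rw [h1, List.range_succ_eq_map, ← Multiset.cons_coe]
  congr 1

lemma revRange (n : ℕ) :
    (Multiset.range n).map (fun j => n - j) = (Multiset.range n).map (·+1) := by
  have h1 : ((Multiset.range n).map (fun j => n - j)).Nodup := by
    apply Multiset.Nodup.map_on ?_ (Multiset.nodup_range n)
    intro x hx y hy hxy
    rw [Multiset.mem_range] at hx hy
    omega
  have h2 : ((Multiset.range n).map (·+1)).Nodup := by
    apply Multiset.Nodup.map_on ?_ (Multiset.nodup_range n)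
    intro x hx y hy hxy
    omega
  rw [Multiset.Nodup.ext h1 h2]
  intro x
  simp only [Multiset.mem_map, Multiset.mem_range]
  constructor
  · rintro ⟨j, hj, rfl⟩
    exact ⟨n - j - 1, by omega, by omega⟩
  · rintro ⟨j, hj, rfl⟩
    exact ⟨n - (j+1), by omega, by omega⟩

lemma sum_map_singleton (n : ℕ) (f : ℕ → ℕ) :
    ((List.range n).map (fun r => ({f r} : Multiset ℕ))).sum = (Multiset.range n).map f := by
  induction n with
  | zero => simp
  | succ n ih =>
    rw [List.range_succ, List.map_append, List.sum_append, Multiset.range_succ,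
      Multiset.map_cons, ih]
    rw [add_comm]
    simp [Multiset.singleton_add]

lemma sum_map_add (l : List ℕ) (f g : ℕ → Multiset ℕ) :
    (l.map (fun i => f i + g i)).sum = (l.map f).sum + (l.map g).sum := by
  induction l with
  | nil => simp
  | cons b l ih =>
    simp only [List.map_cons, List.sum_cons, ih]
    abel

lemma map_range_getD (t : List ℕ) (f : ℕ → ℕ) :
    (Multiset.range t.length).map (fun i => f (t.getD i 0)) = ↑(t.map f) := by
  induction t generalizing f with
  | nil => simp
  | cons b t ih =>
    rw [List.length_cons, range_succ', Multiset.map_cons, Multiset.map_map,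
      List.map_cons, ← Multiset.cons_coe]
    congr 1
    rw [← ih f]
    apply Multiset.map_congr rfl
    intro x _
    simp [Function.comp]

lemma uC_nil (x : ℕ) : uC [] x = 0 := rfl

lemma getD_lt_of_strict_cons {b : ℕ} {t' : List ℕ} (hst : IsStrictList (b :: t'))
    {i : ℕ} (hi : i < t'.length) : t'.getD i 0 < b := by
  rw [List.getD_eq_getElem _ _ hi]
  exact strict_lt_head hst _ (List.getElem_mem hi)

/-- Key identity. -/
lemma GEN : ∀ (t : List ℕ), IsStrictList t → ∀ a : ℕ, t.headD 0 < a →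
    (Multiset.range (a - t.length)).map
        (fun c => a - (t.length + c) + uC t (t.length + c))
      + (Multiset.range t.length).map (fun i => a - t.getD i 0)
      = (Multiset.range a).map (·+1) := by
  intro t
  induction t with
  | nil =>
    intro _ a _
    simp only [List.length_nil, Nat.sub_zero, Multiset.range_zero, Multiset.map_zero, add_zero]
    rw [Multiset.map_congr rfl (g := fun c => a - c)
      (fun c hc => by show a - (0 + c) + uC [] (0 + c) = a - c; rw [uC_nil]; omega)]
    exact revRange a
  | cons b t' ih =>
    intro hst a ha
    have ht' : IsStrictList t' := isStrict_tail hst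
    have hbh : t'.headD 0 < b := by
      rcases t' with - | ⟨c, t''⟩
      · simpa using hst.2 b (by simp)
      · exact strict_lt_head hst c (by simp)
    have hL'b : t'.length < b := lt_of_le_of_lt (len_le_head ht') hbh
    have hba : b < a := by simpa using ha
    -- split the range
    have hsplitn : a - (b :: t').length = (b - t'.length) + (a - 1 - b) := by
      simp only [List.length_cons]; omega
    rw [hsplitn, Multiset.range_add, Multiset.map_add, Multiset.map_map]
    -- part 1
    have hpart1 : (Multiset.range (b - t'.length)).map
        (fun c => a - ((b :: t').length + c) + uC (b :: t') ((b :: t').length + c))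
        = (Multiset.range (b - t'.length)).map
          (fun c => (a - b) + (b - (t'.length + c) + uC t' (t'.length + c))) := by
      apply Multiset.map_congr rfl
      intro c hc
      rw [Multiset.mem_range] at hc
      rw [List.length_cons, uC_cons b t' (by omega)]
      rw [if_pos (by omega : t'.length + 1 + c ≤ b)]
      rw [show t'.length + 1 + c - 1 = t'.length + c from by omega]
      generalize uC t' (t'.length + c) = w
      omega
    -- part 2
    have hpart2 : (Multiset.range (a - 1 - b)).map
        ((fun c => a - ((b :: t').length + c) + uC (b :: t') ((b :: t').length + c))
          ∘ (fun x => (b - t'.length) + x))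
        = (Multiset.range (a - 1 - b)).map (fun j => (a - 1 - b) - j) := by
      apply Multiset.map_congr rfl
      intro j hj
      rw [Multiset.mem_range] at hj
      simp only [Function.comp_apply, List.length_cons]
      rw [uC_cons b t' (by omega)]
      rw [if_neg (by omega : ¬ (t'.length + 1 + (b - t'.length + j) ≤ b))]
      rw [show t'.length + 1 + (b - t'.length + j) - 1 = b + j from by omega]
      rw [uC_zero ht' (by omega)]
      omega
    rw [hpart1, hpart2, revRange]
    -- the subtracted-parts multiset
    have hS : (Multiset.range (b :: t').length).map (fun i => a - (b :: t').getD i 0)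
        = (a - b) ::ₘ (Multiset.range t'.length).map
            (fun i => (a - b) + (b - t'.getD i 0)) := by
      rw [List.length_cons, range_succ', Multiset.map_cons, Multiset.map_map]
      congr 1
      apply Multiset.map_congr rfl
      intro i hi
      rw [Multiset.mem_range] at hi
      have := getD_lt_of_strict_cons hst hi
      simp only [Function.comp_apply, List.getD_cons_succ]
      omega
    rw [hS]
    -- regroup and apply ih
    have key : (Multiset.range (b - t'.length)).map
          (fun c => (a - b) + (b - (t'.length + c) + uC t' (t'.length + c)))
        + (Multiset.range t'.length).map (fun i => (a - b) + (b - t'.getD i 0))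
        = Multiset.map (fun x => (a - b) + x) ((Multiset.range b).map (·+1)) := by
      rw [← ih ht' b hbh, Multiset.map_add, Multiset.map_map, Multiset.map_map]
      congr 1 <;> apply Multiset.map_congr rfl <;> intro x _ <;>
        simp [Function.comp]
    -- final assembly
    have hrhs : (Multiset.range a).map (·+1)
        = ((a - b) ::ₘ (Multiset.range (a - 1 - b)).map (·+1))
          + Multiset.map (fun x => (a - b) + x) ((Multiset.range b).map (·+1)) := by
      have hra : Multiset.range a
          = Multiset.range (a - b) + (Multiset.range b).map (fun x => (a - b) + x) := by
        rw [← Multiset.range_add]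
        congr 1
        omega
      rw [hra, Multiset.map_add]
      congr 1
      · rw [show a - b = (a - 1 - b) + 1 from by omega, Multiset.range_succ, Multiset.map_cons]
      · rw [Multiset.map_map, Multiset.map_map]
        apply Multiset.map_congr rfl
        intro x _
        simp only [Function.comp_apply]
        omega
    rw [hrhs, ← key]
    simp only [← Multiset.singleton_add]
    abel


def barS1 (l : List ℕ) : Multiset ℕ :=
  ((List.range l.length).map (fun i =>
      ((Multiset.range (l.getD i 0)).map (· + 1))
      + ((l.drop (i + 1)).map (fun b => l.getD i 0 + b) : Multiset ℕ))).sum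

def barS2 (l : List ℕ) : Multiset ℕ :=
  ((List.range l.length).map (fun i =>
      ((l.drop (i + 1)).map (fun b => l.getD i 0 - b) : Multiset ℕ))).sum

lemma barM_eq (l : List ℕ) : barMultisetL l = barS1 l - barS2 l := rfl

lemma barS1_cons (a : ℕ) (t : List ℕ) :
    barS1 (a :: t) = ((Multiset.range a).map (· + 1) + (t.map (fun b => a + b) : Multiset ℕ)) + barS1 t := by
  rw [barS1, List.length_cons, List.range_succ_eq_map, List.map_cons, List.sum_cons,
    List.map_map, barS1]
  rfl

lemma barS2_cons (a : ℕ) (t : List ℕ) :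
    barS2 (a :: t) = (t.map (fun b => a - b) : Multiset ℕ) + barS2 t := by
  rw [barS2, List.length_cons, List.range_succ_eq_map, List.map_cons, List.sum_cons,
    List.map_map, barS2]
  rfl

lemma nodup_strict {t : List ℕ} (h : IsStrictList t) : t.Nodup :=
  (List.isChain_iff_pairwise.1 h.1).imp (fun hlt => Nat.ne_of_gt hlt)

lemma S_le_R {a : ℕ} {t : List ℕ} (h : IsStrictList (a :: t)) :
    ((t.map (fun b => a - b) : Multiset ℕ) : Multiset ℕ) ≤ (Multiset.range a).map (· + 1) := by
  have ht := isStrict_tail h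
  apply (Multiset.le_iff_subset ?_).2
  · intro v hv
    rw [Multiset.mem_coe, List.mem_map] at hv
    obtain ⟨b, hb, rfl⟩ := hv
    have h1 : b < a := strict_lt_head h b hb
    have h2 : 0 < b := ht.2 b hb
    rw [Multiset.mem_map]
    exact ⟨a - b - 1, Multiset.mem_range.2 (by omega), by omega⟩
  · rw [Multiset.coe_nodup]
    apply List.Nodup.map_on ?_ (nodup_strict ht)
    intro x hx y hy hxy
    have h1 : x < a := strict_lt_head h x hx
    have h2 : y < a := strict_lt_head h y hy
    omega

lemma singleton_a_le {a : ℕ} {t : List ℕ} (h : IsStrictList (a :: t)) :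
    ({a} : Multiset ℕ) ≤ (Multiset.range a).map (· + 1) - (t.map (fun b => a - b) : Multiset ℕ) := by
  have ht := isStrict_tail h
  rw [Multiset.singleton_le, ← Multiset.count_pos, Multiset.count_sub]
  have h1 : Multiset.count a ((t.map (fun b => a - b) : Multiset ℕ) : Multiset ℕ) = 0 := by
    rw [Multiset.count_eq_zero]
    intro hmem
    rw [Multiset.mem_coe, List.mem_map] at hmem
    obtain ⟨b, hb, hba⟩ := hmem
    have h1 : b < a := strict_lt_head h b hb
    have h2 : 0 < b := ht.2 b hb
    omega
  have h2 : 0 < Multiset.count a ((Multiset.range a).map (· + 1)) := by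
    rw [Multiset.count_pos, Multiset.mem_map]
    have ha : 0 < a := h.2 a (by simp)
    exact ⟨a - 1, Multiset.mem_range.2 (by omega), by omega⟩
  omega

lemma barS2_le_barS1 {l : List ℕ} (h : IsStrictList l) : barS2 l ≤ barS1 l := by
  induction l with
  | nil => simp [barS1, barS2]
  | cons a t ih =>
    rw [barS1_cons, barS2_cons]
    calc (t.map (fun b => a - b) : Multiset ℕ) + barS2 t
        ≤ (Multiset.range a).map (· + 1) + barS1 t :=
          add_le_add (S_le_R h) (ih (isStrict_tail h))
      _ ≤ ((Multiset.range a).map (· + 1) + (t.map (fun b => a + b) : Multiset ℕ)) + barS1 t := by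
          rw [add_comm ((Multiset.range a).map (· + 1)) ((t.map (fun b => a + b) : Multiset ℕ) : Multiset ℕ),
            add_assoc]
          exact le_add_self

lemma bar_cons {a : ℕ} {t : List ℕ} (h : IsStrictList (a :: t)) :
    barMultisetL (a :: t)
      = (((Multiset.range a).map (· + 1) - (t.map (fun b => a - b) : Multiset ℕ))
          + (t.map (fun b => a + b) : Multiset ℕ)) + barMultisetL t := by
  have ht := isStrict_tail h
  rw [barM_eq, barM_eq, barS1_cons, barS2_cons]
  have hSR : ((t.map (fun b => a - b) : Multiset ℕ) : Multiset ℕ)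
      ≤ (Multiset.range a).map (· + 1) + (t.map (fun b => a + b) : Multiset ℕ) :=
    le_trans (S_le_R h) (le_add_of_nonneg_right (by simp))
  rw [← tsub_add_tsub_comm hSR (barS2_le_barS1 ht)]
  congr 1
  rw [add_comm ((Multiset.range a).map (· + 1)) ((t.map (fun b => a + b) : Multiset ℕ) : Multiset ℕ),
    add_tsub_assoc_of_le (S_le_R h), add_comm]


lemma hookLengths_eq (μ : List ℕ) : hookLengths μ =
    ((List.range μ.length).map (fun r =>
      ((Multiset.range (μ.getD r 0)).map (fun c => hookLen μ r c)))).sum := rfl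

section ConsLemmas

variable {a : ℕ} {t : List ℕ}

lemma head_lt (h : IsStrictList (a :: t)) : t.headD 0 < a := by
  rcases t with - | ⟨b, t'⟩
  · simpa using h.2 a (by simp)
  · exact strict_lt_head h b (by simp)

lemma lenM (h : IsStrictList (a :: t)) : (doubledP (a :: t)).length = a := by
  rw [length_doubledP h]; rfl

lemma getD0M (h : IsStrictList (a :: t)) : (doubledP (a :: t)).getD 0 0 = a + 1 := by
  rw [getD_doubledP_lt h (by simp)]
  rfl

lemma getDrow1 (h : IsStrictList (a :: t)) {r : ℕ} (hr : r < t.headD 0) :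
    (doubledP (a :: t)).getD (1+r) 0 = (doubledP t).getD r 0 + 1 := by
  have ht := isStrict_tail h
  have hha := head_lt h
  have hlh := len_le_head ht
  by_cases hrm : r < t.length
  · rw [getD_doubledP_lt h (by simp; omega), show (1:ℕ)+r = r+1 from by omega,
      List.getD_cons_succ, getD_doubledP_lt ht hrm]
    omega
  · rw [getD_doubledP_ge h (by simp; omega) (by show 1+r < a; omega),
      show (1:ℕ)+r+1 = r+2 from by omega, uC_cons a t (by omega),
      if_pos (by omega : r + 2 ≤ a), show r+2-1 = r+1 from by omega,
      getD_doubledP_ge ht (by omega) hr]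
    omega

lemma getDrow2 (h : IsStrictList (a :: t)) {j : ℕ} (hj : j < a - 1 - t.headD 0) :
    (doubledP (a :: t)).getD (1+(t.headD 0 + j)) 0 = 1 := by
  have ht := isStrict_tail h
  have hha := head_lt h
  have hlh := len_le_head ht
  rw [getD_doubledP_ge h (by show t.length + 1 ≤ 1+(t.headD 0 + j); omega)
    (by show 1+(t.headD 0 + j) < a; omega),
    show (1:ℕ)+(t.headD 0 + j)+1 = t.headD 0 + j + 2 from by omega,
    uC_cons a t (by omega), if_pos (by omega : t.headD 0 + j + 2 ≤ a),
    show t.headD 0 + j + 2 - 1 = t.headD 0 + j + 1 from by omega,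
    uC_zero ht (by omega)]

lemma colLen0M (h : IsStrictList (a :: t)) : colLen (doubledP (a :: t)) 0 = a := by
  rw [colLen_doubledP_lt h (by simp)]
  rfl

lemma colLenM (h : IsStrictList (a :: t)) {c : ℕ} (hc : c < a) :
    colLen (doubledP (a :: t)) (c+1) = colLen (doubledP t) c + 1 := by
  have ht := isStrict_tail h
  by_cases hcm : c < t.length
  · rw [colLen_doubledP_lt h (by simp; omega), List.getD_cons_succ,
      colLen_doubledP_lt ht hcm]
    omega
  · rw [colLen_doubledP_ge h (by simp; omega), uC_cons a t (by omega),
      if_pos (by omega : c + 1 ≤ a), show c+1-1 = c from by omega,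
      colLen_doubledP_ge ht (by omega)]
    omega

lemma hook00M (h : IsStrictList (a :: t)) : hookLen (doubledP (a :: t)) 0 0 = 2*a := by
  rw [hookLen, getD0M h, colLen0M h]
  omega

lemma hook0cM (h : IsStrictList (a :: t)) {c : ℕ} (hc : c < a) :
    hookLen (doubledP (a :: t)) 0 (c+1) = a - c + colLen (doubledP t) c := by
  rw [hookLen, getD0M h, colLenM h hc]
  generalize colLen (doubledP t) c = w
  omega

lemma hookr0M (h : IsStrictList (a :: t)) {r : ℕ} (hr : r < t.headD 0) :
    hookLen (doubledP (a :: t)) (1+r) 0 = (doubledP t).getD r 0 + (a - 1 - r) := by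
  have hha := head_lt h
  rw [hookLen, getDrow1 h hr, colLen0M h]
  generalize (doubledP t).getD r 0 = w
  omega

lemma hookj0M (h : IsStrictList (a :: t)) {j : ℕ} (hj : j < a - 1 - t.headD 0) :
    hookLen (doubledP (a :: t)) (1+(t.headD 0 + j)) 0 = a - 1 - t.headD 0 - j := by
  rw [hookLen, getDrow2 h hj, colLen0M h]
  omega

lemma hookrcM (h : IsStrictList (a :: t)) {r c : ℕ} (hr : r < t.headD 0)
    (hc : c < (doubledP t).getD r 0) :
    hookLen (doubledP (a :: t)) (1+r) (c+1) = hookLen (doubledP t) r c := by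
  have ht := isStrict_tail h
  have hha := head_lt h
  have hlh := len_le_head ht
  have hbound : (doubledP t).getD r 0 ≤ a := by
    by_cases hrm : r < t.length
    · rw [getD_doubledP_lt ht hrm]
      have := strict_head ht hrm
      omega
    · rw [getD_doubledP_ge ht (by omega) hr]
      have := uC_le t (r+1)
      omega
  rw [hookLen, hookLen, getDrow1 h hr, colLenM h (by omega)]
  generalize (doubledP t).getD r 0 = w1 at *
  generalize colLen (doubledP t) c = w2
  omega

lemma hook_decomp (h : IsStrictList (a :: t)) :
    hookLengths (doubledP (a :: t))
      = ({2*a} + (Multiset.range a).map (fun c => a - c + colLen (doubledP t) c))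
        + (((Multiset.range (t.headD 0)).map (fun r => (doubledP t).getD r 0 + (a - 1 - r))
            + hookLengths (doubledP t))
          + (Multiset.range (a - 1 - t.headD 0)).map (·+1)) := by
  have ht := isStrict_tail h
  have hha := head_lt h
  have hlh := len_le_head ht
  have hνlen : (doubledP t).length = t.headD 0 := length_doubledP ht
  rw [hookLengths_eq, lenM h]
  have hrsplit : List.range a = [0] ++ ((List.range (t.headD 0)).map (fun r => 1 + r)
      ++ (List.range (a - 1 - t.headD 0)).map (fun j => 1 + (t.headD 0 + j))) := by
    have h0 : List.range a = List.range (1 + (t.headD 0 + (a - 1 - t.headD 0))) := by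
      congr 1; omega
    rw [h0, List.range_add, List.range_add, List.map_append, List.map_map]
    rfl
  rw [hrsplit, List.map_append, List.map_append, List.sum_append, List.sum_append,
    List.map_map, List.map_map]
  have hp0 : ((([0] : List ℕ)).map (fun r =>
      (Multiset.range ((doubledP (a::t)).getD r 0)).map
        (fun c => hookLen (doubledP (a::t)) r c))).sum
      = {2*a} + (Multiset.range a).map (fun c => a - c + colLen (doubledP t) c) := by
    simp only [List.map_cons, List.map_nil, List.sum_cons, List.sum_nil, add_zero]
    rw [getD0M h, range_succ', Multiset.map_cons, Multiset.map_map, hook00M h]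
    rw [Multiset.map_congr rfl (g := fun c => a - c + colLen (doubledP t) c) ?_]
    · rw [Multiset.singleton_add]
    · intro c hc
      rw [Multiset.mem_range] at hc
      show hookLen (doubledP (a :: t)) 0 (c+1) = _
      exact hook0cM h hc
  have hp1 : ((List.range (t.headD 0)).map ((fun r =>
      (Multiset.range ((doubledP (a::t)).getD r 0)).map
        (fun c => hookLen (doubledP (a::t)) r c)) ∘ (fun r => 1 + r))).sum
      = (Multiset.range (t.headD 0)).map (fun r => (doubledP t).getD r 0 + (a - 1 - r))
        + hookLengths (doubledP t) := by
    rw [List.map_congr_left (g := fun r => ({(doubledP t).getD r 0 + (a - 1 - r)} : Multiset ℕ)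
        + (Multiset.range ((doubledP t).getD r 0)).map (fun c => hookLen (doubledP t) r c)) ?_]
    · rw [sum_map_add, sum_map_singleton]
      congr 1
      rw [hookLengths_eq, hνlen]
    · intro r hr
      rw [List.mem_range] at hr
      show (Multiset.range ((doubledP (a::t)).getD (1+r) 0)).map
          (fun c => hookLen (doubledP (a::t)) (1+r) c)
          = ({(doubledP t).getD r 0 + (a - 1 - r)} : Multiset ℕ)
            + (Multiset.range ((doubledP t).getD r 0)).map (fun c => hookLen (doubledP t) r c)
      rw [getDrow1 h hr, range_succ', Multiset.map_cons, Multiset.map_map, hookr0M h hr]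
      rw [Multiset.map_congr rfl (g := fun c => hookLen (doubledP t) r c) ?_]
      · rw [Multiset.singleton_add]
      · intro c hc
        rw [Multiset.mem_range] at hc
        show hookLen (doubledP (a :: t)) (1+r) (c+1) = _
        exact hookrcM h hr hc
  have hp2 : ((List.range (a - 1 - t.headD 0)).map ((fun r =>
      (Multiset.range ((doubledP (a::t)).getD r 0)).map
        (fun c => hookLen (doubledP (a::t)) r c)) ∘ (fun j => 1 + (t.headD 0 + j)))).sum
      = (Multiset.range (a - 1 - t.headD 0)).map (·+1) := by
    rw [List.map_congr_left (g := fun j => ({a - 1 - t.headD 0 - j} : Multiset ℕ)) ?_]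
    · rw [sum_map_singleton, revRange]
    · intro j hj
      rw [List.mem_range] at hj
      show (Multiset.range ((doubledP (a::t)).getD (1+(t.headD 0 + j)) 0)).map
          (fun c => hookLen (doubledP (a::t)) (1+(t.headD 0 + j)) c)
          = ({a - 1 - t.headD 0 - j} : Multiset ℕ)
      rw [getDrow2 h hj, show Multiset.range 1 = ({0} : Multiset ℕ) from rfl,
        Multiset.map_singleton, hookj0M h hj]
  rw [hp0, hp1, hp2]

lemma MA_split (h : IsStrictList (a :: t)) :
    (Multiset.range a).map (fun c => a - c + colLen (doubledP t) c)
      = (t.map (fun b => a + b) : Multiset ℕ)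
        + (Multiset.range (a - t.length)).map
            (fun c => a - (t.length + c) + uC t (t.length + c)) := by
  have ht := isStrict_tail h
  have hha := head_lt h
  have hlh := len_le_head ht
  have hra : Multiset.range a = Multiset.range t.length
      + (Multiset.range (a - t.length)).map (fun x => t.length + x) := by
    rw [← Multiset.range_add]; congr 1; omega
  rw [hra, Multiset.map_add, Multiset.map_map]
  congr 1
  · rw [Multiset.map_congr rfl (g := fun c => a + t.getD c 0) ?_]
    · exact map_range_getD t (fun b => a + b)
    · intro c hc
      rw [Multiset.mem_range] at hc
      have h2 := strict_head ht hc
      show a - c + colLen (doubledP t) c = a + t.getD c 0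
      rw [colLen_doubledP_lt ht hc]
      omega
  · apply Multiset.map_congr rfl
    intro c _
    show a - (t.length + c) + colLen (doubledP t) (t.length + c) = _
    rw [colLen_doubledP_ge ht (by omega)]

lemma MX_split (h : IsStrictList (a :: t)) :
    (Multiset.range (t.headD 0)).map (fun r => (doubledP t).getD r 0 + (a - 1 - r))
      = (t.map (fun b => a + b) : Multiset ℕ)
        + (Multiset.range (t.headD 0 - t.length)).map
            (fun k => uC t (t.length + k + 1) + (a - 1 - (t.length + k))) := by
  have ht := isStrict_tail h
  have hha := head_lt h
  have hlh := len_le_head ht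
  have hra : Multiset.range (t.headD 0) = Multiset.range t.length
      + (Multiset.range (t.headD 0 - t.length)).map (fun x => t.length + x) := by
    rw [← Multiset.range_add]; congr 1; omega
  rw [hra, Multiset.map_add, Multiset.map_map]
  congr 1
  · rw [Multiset.map_congr rfl (g := fun r => a + t.getD r 0) ?_]
    · exact map_range_getD t (fun b => a + b)
    · intro r hr
      rw [Multiset.mem_range] at hr
      have h2 := strict_head ht hr
      show (doubledP t).getD r 0 + (a - 1 - r) = a + t.getD r 0
      rw [getD_doubledP_lt ht hr]
      omega
  · apply Multiset.map_congr rfl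
    intro k hk
    rw [Multiset.mem_range] at hk
    show (doubledP t).getD (t.length + k) 0 + (a - 1 - (t.length + k)) = _
    rw [getD_doubledP_ge ht (by omega) (by omega)]

lemma CORE1 (h : IsStrictList (a :: t)) :
    (Multiset.range (a - t.length)).map
        (fun c => a - (t.length + c) + uC t (t.length + c))
      = {a} + ((Multiset.range (t.headD 0 - t.length)).map
            (fun k => uC t (t.length + k + 1) + (a - 1 - (t.length + k)))
          + (Multiset.range (a - 1 - t.headD 0)).map (·+1)) := by
  have ht := isStrict_tail h
  have hha := head_lt h
  have hlh := len_le_head ht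
  have h0 : Multiset.range (a - t.length) = Multiset.range 1
      + (Multiset.range ((t.headD 0 - t.length) + (a - 1 - t.headD 0))).map
          (fun x => 1 + x) := by
    rw [← Multiset.range_add]; congr 1; omega
  rw [h0, Multiset.range_add]
  simp only [Multiset.map_add, Multiset.map_map]
  congr 1
  · rw [show Multiset.range 1 = ({0} : Multiset ℕ) from rfl, Multiset.map_singleton]
    have : a - (t.length + 0) + uC t (t.length + 0) = a := by
      rw [uC_all ht (by omega)]
      omega
    rw [this]
  congr 1
  · apply Multiset.map_congr rfl
    intro k hk
    rw [Multiset.mem_range] at hk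
    show a - (t.length + (1 + k)) + uC t (t.length + (1 + k)) = _
    rw [show t.length + (1 + k) = t.length + k + 1 from by omega]
    generalize uC t (t.length + k + 1) = w
    omega
  · rw [← revRange (a - 1 - t.headD 0)]
    apply Multiset.map_congr rfl
    intro j hj
    rw [Multiset.mem_range] at hj
    show a - (t.length + (1 + ((t.headD 0 - t.length) + j)))
        + uC t (t.length + (1 + ((t.headD 0 - t.length) + j))) = _
    rw [show t.length + (1 + ((t.headD 0 - t.length) + j)) = t.headD 0 + 1 + j from by omega,
      uC_zero ht (by omega)]
    omega

lemma CORE2 (h : IsStrictList (a :: t)) :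
    (Multiset.range (a - t.length)).map
        (fun c => a - (t.length + c) + uC t (t.length + c))
      = (Multiset.range a).map (·+1) - (t.map (fun b => a - b) : Multiset ℕ) := by
  have ht := isStrict_tail h
  have hg := GEN t ht a (head_lt h)
  have hs : (Multiset.range t.length).map (fun i => a - t.getD i 0)
      = (t.map (fun b => a - b) : Multiset ℕ) := map_range_getD t (fun b => a - b)
  rw [hs] at hg
  exact eq_tsub_of_add_eq hg

end ConsLemmas



/-- the hook lengths of `D(λ)` are `P(λ) ∪ DP(λ) ∪ B₀(λ) ∪ B₀(λ)`,
where `P(λ)` are the parts, `DP(λ)` the doubled parts, and `B₀(λ) = B(λ) \ P(λ)` the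
bar lengths that are not parts (and indeed `P(λ) ⊆ B(λ)`). -/
theorem hookLengths_doubled (l : List ℕ) (hl : IsStrictList l) :
    (l : Multiset ℕ) ≤ barMultisetL l ∧
    hookLengths (doubledP l) =
      (l : Multiset ℕ) + (l : Multiset ℕ).map (fun a => 2 * a)
        + (barMultisetL l - (l : Multiset ℕ)) + (barMultisetL l - (l : Multiset ℕ)) := by
  induction l with
  | nil =>
    constructor
    · simp
    · simp [hookLengths_eq, barM_eq, barS1, barS2, doubledP]
  | cons a t ih =>
    have ht : IsStrictList t := isStrict_tail hl
    obtain ⟨ih1, ih2⟩ := ih ht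
    have hha := head_lt hl
    have hlh := len_le_head ht
    have hcoe : ((a :: t : List ℕ) : Multiset ℕ) = {a} + (t : Multiset ℕ) := by
      rw [Multiset.singleton_add, Multiset.cons_coe]
    have hsing : ({a} : Multiset ℕ)
        ≤ ((Multiset.range a).map (· + 1) - (t.map (fun b => a - b) : Multiset ℕ))
          + (t.map (fun b => a + b) : Multiset ℕ) :=
      le_trans (singleton_a_le hl) (le_add_of_nonneg_right zero_le)
    constructor
    · rw [bar_cons hl, hcoe]
      exact add_le_add hsing ih1
    · rw [hook_decomp hl, MA_split hl, MX_split hl, ih2, bar_cons hl, hcoe]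
      have hX : (((Multiset.range a).map (· + 1) - (t.map (fun b => a - b) : Multiset ℕ)
              + (t.map (fun b => a + b) : Multiset ℕ)) + barMultisetL t)
            - (({a} : Multiset ℕ) + (t : Multiset ℕ))
          = (((Multiset.range (t.headD 0 - t.length)).map
                (fun k => uC t (t.length + k + 1) + (a - 1 - (t.length + k)))
              + (Multiset.range (a - 1 - t.headD 0)).map (·+1))
              + (t.map (fun b => a + b) : Multiset ℕ))
            + (barMultisetL t - (t : Multiset ℕ)) := by
        rw [← tsub_add_tsub_comm hsing ih1]
        congr 1
        rw [← CORE2 hl, CORE1 hl, add_assoc, add_tsub_cancel_left]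
      rw [hX, CORE1 hl]
      simp only [Multiset.map_add, Multiset.map_singleton]
      ac_rfl


end BarPartitions
end

section
/- Let λ be a strict partition, d ≥ 3 odd, and consider the d-abacus of D(λ) built from a β-set X for D(λ) with |X| a multiple of d, minimal with this property. Writing x_i for the number of beads on runner i (0 ≤ i ≤ d-1), one has x_i + x_{d-i mod d} = x_j + x_{d-j mod d} for all 0 ≤ i, j ≤ d-1. -/
namespace BarPartitions

/-! With `N = d ⌈a₁/d⌉` beads, the β-set of `D(λ)` consists of the numbers `N + aᵢ`
together with `{0, …, N - 1} \ {N - aᵢ}`: this is the usual complementation for the Frobenius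
coordinates `(a | a - 1)`. Counting residues modulo `d` gives
`xᵢ = #{aᵢ ≡ i} + N / d - #{aᵢ ≡ -i}`, so `xᵢ + x₋ᵢ = 2N / d` for every `i`. -/

lemma length_filter_range_gt_iff {p : ℕ → Bool} {m c : ℕ}
    (hp : ∀ ⦃a b⦄, a ≤ b → b < m → p b → p a) (hc : c < m) :
    c < ((List.range m).filter p).length ↔ p c := by
  induction m with
  | zero => omega
  | succ m ih =>
    rw [List.range_succ, List.filter_append, List.length_append]
    by_cases hpm : p m
    · have hall : (List.range m).filter p = List.range m :=
        List.filter_eq_self.2 fun a ha => hp (List.mem_range.1 ha).le (by omega) hpm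
      simp only [hall, hpm, List.length_range, List.filter_cons_of_pos, List.filter_nil,
        List.length_singleton]
      exact ⟨fun _ => hp (by omega) (by omega) hpm, fun _ => by omega⟩
    · simp only [hpm, Bool.false_eq_true, not_false_eq_true, List.filter_cons_of_neg,
        List.filter_nil, List.length_nil, add_zero]
      rcases Nat.lt_succ_iff_lt_or_eq.1 hc with hc | rfl
      · exact ih (fun a b hab hb => hp hab (by omega)) hc
      · simpa [hpm] using List.length_filter_le p (List.range c)

lemma add_eq_range_of_nodup {s t : Multiset ℕ} {N : ℕ} (hs : s.Nodup) (ht : t.Nodup)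
    (hst : Disjoint s t) (hlt : ∀ x ∈ s + t, x < N) (hcard : N ≤ s.card + t.card) :
    s + t = Multiset.range N := by
  refine Multiset.eq_of_le_of_card_le ?_ (by simpa using hcard)
  exact (Multiset.le_iff_subset (Multiset.nodup_add.2 ⟨hs, ht, hst⟩)).2
    fun x hx => Multiset.mem_range.2 (hlt x hx)

lemma countP_range_mul_natCast_eq {d : ℕ} (hd : 0 < d) (c r : ℕ) :
    (Multiset.range (d * c)).countP (fun v : ℕ => (v : ZMod d) = r) = c := by
  have h := Nat.count_modEq_card (b := d * c) hd r
  rw [Nat.mul_mod_right, if_neg (Nat.not_lt_zero _), add_zero,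
    Nat.mul_div_cancel_left c hd, Nat.count_eq_card_filter_range] at h
  rw [Multiset.countP_congr rfl fun v _ => propext (ZMod.natCast_eq_natCast_iff v r d),
    Multiset.countP_eq_card_filter]
  exact h

lemma le_minMul {d : ℕ} (hd : 0 < d) (n : ℕ) : n ≤ minMul d n := by
  have h1 := Nat.div_add_mod (n + d - 1) d
  have h2 := Nat.mod_lt (n + d - 1) hd
  unfold minMul
  omega

lemma dvd_minMul (d n : ℕ) : d ∣ minMul d n := Dvd.intro _ rfl

/-- For `k ≥ l.length`, row `k` of `D(λ)`: the columns `c < l.length` have lengths `c + a_c`. -/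
def lowerRowLength (l : List ℕ) (k : ℕ) : ℕ :=
  ((List.range l.length).filter (fun c => k + 1 ≤ c + l.getD c 0)).length

section
variable {l : List ℕ}

lemma lowerRowLength_le_length (k : ℕ) : lowerRowLength l k ≤ l.length :=
  (List.length_filter_le _ _).trans_eq List.length_range

lemma lowerRowLength_antitone : Antitone (lowerRowLength l) := by
  intro k k' hk
  simp only [lowerRowLength, ← List.countP_eq_length_filter]
  exact List.countP_mono_left fun c _ hc => by simp only [decide_eq_true_eq] at *; omega

lemma IsStrictList.getD_lt_getD (hl : IsStrictList l) {i j : ℕ} (hij : i < j)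
    (hj : j < l.length) : l.getD j 0 < l.getD i 0 := by
  rw [List.getD_eq_getElem l 0 hj, List.getD_eq_getElem l 0 (hij.trans hj)]
  exact List.pairwise_iff_getElem.1 (List.isChain_iff_pairwise.1 hl.1) i j _ hj hij

lemma IsStrictList.getD_add_le_getD_add (hl : IsStrictList l) {i j : ℕ} (hij : i ≤ j)
    (hj : j < l.length) : l.getD j 0 + j ≤ l.getD i 0 + i := by
  induction j, hij using Nat.le_induction with
  | base => rfl
  | succ j hij ih =>
    have := hl.getD_lt_getD (by omega : j < j + 1) hj
    have := ih (by omega)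
    omega

lemma IsStrictList.length_le_headD (hl : IsStrictList l) : l.length ≤ l.headD 0 := by
  rcases Nat.eq_zero_or_pos l.length with h | h
  · omega
  have hlast := hl.getD_add_le_getD_add (Nat.zero_le _) (Nat.sub_lt h Nat.one_pos)
  have hpos := hl.2 _ (List.getElem_mem (Nat.sub_lt h Nat.one_pos))
  rw [← List.getD_eq_getElem l 0] at hpos
  rw [List.headD_eq_getD]
  omega

lemma IsStrictList.getD_add_le_headD (hl : IsStrictList l) {k : ℕ} (hk : k < l.length) :
    l.getD k 0 + k ≤ l.headD 0 := by
  rw [List.headD_eq_getD]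
  exact hl.getD_add_le_getD_add (Nat.zero_le k) hk

lemma IsStrictList.le_headD_of_mem (hl : IsStrictList l) {a : ℕ} (ha : a ∈ l) :
    a ≤ l.headD 0 := by
  obtain ⟨k, hk, rfl⟩ := List.mem_iff_getElem.1 ha
  have := hl.getD_add_le_headD hk
  rw [List.getD_eq_getElem l 0 hk] at this
  omega

lemma IsStrictList.nodup (hl : IsStrictList l) : l.Nodup :=
  (List.isChain_iff_pairwise.1 hl.1).imp ne_of_gt

lemma IsStrictList.lt_lowerRowLength_iff (hl : IsStrictList l) {k c : ℕ} (hc : c < l.length) :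
    c < lowerRowLength l k ↔ k + 1 ≤ c + l.getD c 0 :=
  (length_filter_range_gt_iff (fun a b hab hb hpb => by
    have := hl.getD_add_le_getD_add hab hb
    simp only [decide_eq_true_eq] at hpb ⊢
    omega) hc).trans decide_eq_true_iff

/-- The columns counted by `lowerRowLength l k` form an initial segment `[0, q)`, and
`a_j = k + 1 - q` would put `j` both inside and outside it. -/
lemma IsStrictList.add_lowerRowLength_ne (hl : IsStrictList l) {a : ℕ} (ha : a ∈ l) (k : ℕ) :
    a + lowerRowLength l k ≠ k + 1 := by
  obtain ⟨j, hj, rfl⟩ := List.mem_iff_getElem.1 ha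
  rw [← List.getD_eq_getElem l 0 hj]
  intro h
  have := hl.lt_lowerRowLength_iff (k := k) hj
  by_cases hjk : j < lowerRowLength l k <;> simp only [hjk, true_iff, false_iff] at this <;> omega

lemma IsStrictList.length_doubledP (hl : IsStrictList l) : (doubledP l).length = l.headD 0 := by
  have := hl.length_le_headD
  simp only [doubledP, List.length_append, List.length_map, List.length_range]
  omega

lemma getD_doubledP_of_lt {k : ℕ} (hk : k < l.length) :
    (doubledP l).getD k 0 = l.getD k 0 + k + 1 := by
  rw [doubledP, List.getD_append _ _ _ _ (by simpa using hk),
    List.getD_eq_getElem _ 0 (by simpa using hk)]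
  simp

lemma IsStrictList.getD_doubledP_of_length_le (hl : IsStrictList l) {k : ℕ}
    (hk : l.length ≤ k) : (doubledP l).getD k 0 = lowerRowLength l k := by
  rcases Nat.lt_or_ge k (l.headD 0) with hkA | hkA
  · rw [doubledP, List.getD_append_right _ _ _ _ (by simpa using hk),
      List.getD_eq_getElem _ 0 (by simp only [List.length_map, List.length_range]; omega)]
    simp only [List.getElem_map, List.getElem_range, List.length_map, List.length_range,
      lowerRowLength]
    rw [Nat.add_sub_cancel' hk]
  · rw [List.getD_eq_default _ 0 (by rw [hl.length_doubledP]; omega), eq_comm,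
      lowerRowLength, List.length_eq_zero_iff, List.filter_eq_nil_iff]
    intro c hc
    have := hl.getD_add_le_headD (List.mem_range.1 hc)
    simp only [decide_eq_true_eq]
    omega

/-- The β-numbers of the rows `k ≥ l.length` of `D(λ)` in a β-set with `N` elements. -/
def lowerBetaList (l : List ℕ) (N : ℕ) : List ℕ :=
  (List.range' l.length (N - l.length)).map (fun k => lowerRowLength l k + (N - 1 - k))

lemma IsStrictList.betaList_doubledP (hl : IsStrictList l) {N : ℕ} (hN : l.headD 0 ≤ N) :
    betaList (doubledP l) N = l.map (N + ·) ++ lowerBetaList l N := by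
  have hmN := hl.length_le_headD.trans hN
  have hsplit : List.range N = List.range l.length ++ List.range' l.length (N - l.length) := by
    simpa [Nat.add_sub_cancel' hmN, ← List.range_eq_range'] using
      (List.range'_append_1 (s := 0) (m := l.length) (n := N - l.length)).symm
  rw [betaList, hsplit, List.map_append, lowerBetaList]
  congr 1
  · refine List.ext_getElem (by simp) fun k hk _ => ?_
    rw [List.length_map, List.length_range] at hk
    simp only [List.getElem_map, List.getElem_range]
    rw [getD_doubledP_of_lt hk, List.getD_eq_getElem l 0 hk]
    omega
  · refine List.map_congr_left fun k hk => ?_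
    rw [hl.getD_doubledP_of_length_le (List.mem_range'_1.1 hk).1]

lemma IsStrictList.lowerBetaList_add_map_sub (hl : IsStrictList l) {N : ℕ}
    (hN : l.headD 0 ≤ N) :
    (lowerBetaList l N : Multiset ℕ) + (l.map (N - ·) : Multiset ℕ) = Multiset.range N := by
  have hmN := hl.length_le_headD.trans hN
  have hle {a : ℕ} (ha : a ∈ l) : 0 < a ∧ a ≤ N :=
    ⟨hl.2 a ha, (hl.le_headD_of_mem ha).trans hN⟩
  apply add_eq_range_of_nodup
  · rw [Multiset.coe_nodup]
    refine List.Nodup.map_on (fun x hx y hy hxy => ?_) List.nodup_range'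
    rw [List.mem_range'_1] at hx hy
    rcases le_total x y with h | h
    · have := lowerRowLength_antitone (l := l) h
      omega
    · have := lowerRowLength_antitone (l := l) h
      omega
  · rw [Multiset.coe_nodup]
    exact hl.nodup.map_on fun a ha b hb h => by have := hle ha; have := hle hb; omega
  · rw [Multiset.coe_disjoint]
    intro x hx hx'
    obtain ⟨k, hk, rfl⟩ := List.mem_map.1 hx
    obtain ⟨a, ha, hak⟩ := List.mem_map.1 hx'
    rw [List.mem_range'_1] at hk
    have := hl.add_lowerRowLength_ne ha k
    have := lowerRowLength_le_length (l := l) k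
    have := hle ha
    omega
  · intro x hx
    rcases Multiset.mem_add.1 hx with hx | hx <;> obtain ⟨y, hy, rfl⟩ := List.mem_map.1 hx
    · have := lowerRowLength_le_length (l := l) y
      rw [List.mem_range'_1] at hy
      omega
    · have := hle hy
      omega
  · simp only [lowerBetaList, Multiset.coe_card, List.length_map, List.length_range']
    omega

lemma IsStrictList.betaList_doubledP_add_map_sub (hl : IsStrictList l) {N : ℕ}
    (hN : l.headD 0 ≤ N) :
    (betaList (doubledP l) N : Multiset ℕ) + (l.map (N - ·) : Multiset ℕ)
      = (l.map (N + ·) : Multiset ℕ) + Multiset.range N := by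
  rw [hl.betaList_doubledP hN, ← Multiset.coe_add, add_assoc, hl.lowerBetaList_add_map_sub hN]

lemma IsStrictList.beadCountL_doubledP_add_countP (hl : IsStrictList l) {d i : ℕ} (hi : i < d) :
    beadCountL d (doubledP l) i + l.countP (fun a : ℕ => (a : ZMod d) = -i)
      = l.countP (fun a : ℕ => (a : ZMod d) = i) + (l.headD 0 + d - 1) / d := by
  have hd : 0 < d := by omega
  have hN := le_minMul hd (l.headD 0)
  set N := minMul d (l.headD 0)
  have hN0 : (N : ZMod d) = 0 := (ZMod.natCast_eq_zero_iff _ _).2 (dvd_minMul _ _)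
  have key := congrArg (Multiset.countP fun v : ℕ => (v : ZMod d) = i)
    (hl.betaList_doubledP_add_map_sub hN)
  simp only [Multiset.countP_add, Multiset.coe_countP, List.countP_map] at key
  have hbead : beadCountL d (doubledP l) i
      = (betaList (doubledP l) N).countP fun v : ℕ => (v : ZMod d) = i := by
    rw [beadCountL, hl.length_doubledP, ← List.countP_eq_length_filter]
    refine List.countP_congr fun v _ => ?_
    rw [decide_eq_true_iff, decide_eq_true_iff, ZMod.natCast_eq_natCast_iff', Nat.mod_eq_of_lt hi]
  have hsub : l.countP ((fun v : ℕ => decide ((v : ZMod d) = i)) ∘ (N - ·))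
      = l.countP fun a : ℕ => (a : ZMod d) = -i := by
    refine List.countP_congr fun a ha => ?_
    simp [Nat.cast_sub ((hl.le_headD_of_mem ha).trans hN), hN0, neg_eq_iff_eq_neg]
  have hadd : l.countP ((fun v : ℕ => decide ((v : ZMod d) = i)) ∘ (N + ·))
      = l.countP fun a : ℕ => (a : ZMod d) = i := by
    refine List.countP_congr fun a _ => ?_
    simp [hN0]
  have hrange : (Multiset.range N).countP (fun v : ℕ => (v : ZMod d) = i)
      = (l.headD 0 + d - 1) / d :=
    countP_range_mul_natCast_eq hd _ _
  rw [hbead, ← hsub, ← hadd, ← hrange]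
  exact key

lemma IsStrictList.beadCountL_doubledP_add_beadCountL_sub_mod (hl : IsStrictList l) {d i : ℕ}
    (hi : i < d) :
    beadCountL d (doubledP l) i + beadCountL d (doubledP l) ((d - i) % d)
      = 2 * ((l.headD 0 + d - 1) / d) := by
  have hneg : (((d - i) % d : ℕ) : ZMod d) = -i := by
    rw [ZMod.natCast_mod, Nat.cast_sub hi.le, ZMod.natCast_self, zero_sub]
  have h := hl.beadCountL_doubledP_add_countP hi
  have h' := hl.beadCountL_doubledP_add_countP (Nat.mod_lt (d - i) (show 0 < d by omega))
  rw [hneg, neg_neg] at h'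
  omega

end

theorem beadCount_symm_general (d : ℕ) (l : List ℕ) (hl : IsStrictList l) :
    ∀ i < d, ∀ j < d,
      beadCountL d (doubledP l) i + beadCountL d (doubledP l) ((d - i) % d)
        = beadCountL d (doubledP l) j + beadCountL d (doubledP l) ((d - j) % d) := by
  intro i hi j hj
  rw [hl.beadCountL_doubledP_add_beadCountL_sub_mod hi,
    hl.beadCountL_doubledP_add_beadCountL_sub_mod hj]

/-- on the minimally normalized `d`-abacus of `D(λ)`, the bead counts
satisfy `xᵢ + x_{d-i mod d} = xⱼ + x_{d-j mod d}` for all `i, j < d`. -/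
theorem beadCount_symm (d : ℕ) (hd : Odd d) (h3 : 3 ≤ d) (l : List ℕ) (hl : IsStrictList l) :
    ∀ i < d, ∀ j < d,
      beadCountL d (doubledP l) i + beadCountL d (doubledP l) ((d - i) % d)
        = beadCountL d (doubledP l) j + beadCountL d (doubledP l) ((d - j) % d) :=
  beadCount_symm_general d l hl

end BarPartitions
end

section
/- Let λ be a strict partition with doubled partition D(λ). For every hook z of D(λ) whose corresponding cell lies strictly above the diagonal in a row corresponding to a part of λ but is not itself on the diagonal or a 'part hook' (i.e. z ∈ B(D(λ)), a bar that is not a part), there is a hook z* of D(λ) below the diagonal with h(z) = h(z*); moreover if the hand node of z has d-residue i and the foot node has d-residue j+1 mod d, then the hand node of z* has d-residue (d-j) mod d and its foot node has d-residue (d-i)+1 mod d, for any odd d ≥ 3. -/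
namespace Nat

lemma count_lt_eq_of_le {K N : ℕ} (h : K ≤ N) : count (· < K) N = K := by
  obtain ⟨n, rfl⟩ := Nat.exists_eq_add_of_le h
  rw [count_add, count_iff_forall.mpr fun _ h => h,
    count_iff_forall_not.mpr fun _ _ => by omega, Nat.add_zero]

lemma lt_count_iff_of_downward_closed {p : ℕ → Prop} [DecidablePred p] {n c : ℕ}
    (hp : ∀ x y, x ≤ y → y < n → p y → p x) (hc : c < n) : c < count p n ↔ p c := by
  refine ⟨fun h => ?_, fun h => ?_⟩
  · by_contra hpc
    obtain ⟨k, rfl⟩ := Nat.exists_eq_add_of_le hc.le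
    rw [count_add, count_iff_forall_not.mpr fun y hy hpy =>
      hpc (hp c (c + y) (by omega) (by omega) hpy)] at h
    have := count_le (p := p) (n := c)
    omega
  · calc c < c + 1 := c.lt_succ_self
      _ = count p (c + 1) :=
        (count_iff_forall.mpr fun x hx => hp x c (by omega) hc h).symm
      _ ≤ count p n := count_monotone p hc

end Nat

namespace BarPartitions

def handContent (μ : List ℕ) (r : ℕ) : ℤ := μ.getD r 0 - 1 - r

def footContent (μ : List ℕ) (c : ℕ) : ℤ := c - colLen μ c + 1

section Partition

variable {μ : List ℕ} {r c r' c' : ℕ}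

lemma hookLen_eq_handContent_sub_footContent (hc : c < μ.getD r 0) (hr : r < colLen μ c) :
    (hookLen μ r c : ℤ) = handContent μ r - footContent μ c + 1 := by
  unfold hookLen handContent footContent
  omega

lemma hookLen_eq_of_contents_conj (hc : c < μ.getD r 0) (hr : r < colLen μ c)
    (hc' : c' < μ.getD r' 0) (hr' : r' < colLen μ c')
    (hhand : handContent μ r' = 1 - footContent μ c)
    (hfoot : footContent μ c' = 1 - handContent μ r) :
    hookLen μ r' c' = hookLen μ r c := by
  have h := hookLen_eq_handContent_sub_footContent hc hr
  have h' := hookLen_eq_handContent_sub_footContent hc' hr'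
  omega

lemma handRes_footRes_of_contents_conj (d : ℕ)
    (hhand : handContent μ r' = 1 - footContent μ c)
    (hfoot : footContent μ c' = 1 - handContent μ r) (i j : ZMod d)
    (hi : handRes d μ r = i) (hj : footRes d μ c = j + 1) :
    handRes d μ r' = -j ∧ footRes d μ c' = -i + 1 := by
  change ((handContent μ r : ℤ) : ZMod d) = i at hi
  change ((footContent μ c : ℤ) : ZMod d) = j + 1 at hj
  change ((handContent μ r' : ℤ) : ZMod d) = -j ∧ ((footContent μ c' : ℤ) : ZMod d) = -i + 1
  rw [hhand, hfoot]
  push_cast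
  constructor
  · linear_combination -hj
  · linear_combination -hi

lemma colLen_append (ν : List ℕ) : colLen (μ ++ ν) c = colLen μ c + colLen ν c := by
  simp only [colLen, List.filter_append, List.length_append]

lemma colLen_map_range (f : ℕ → ℕ) (n : ℕ) :
    colLen ((List.range n).map f) c = Nat.count (fun i => c < f i) n := by
  simp only [colLen, List.filter_map, List.length_map, Nat.count, List.countP_eq_length_filter]
  rfl

end Partition

namespace IsStrictList

variable {l : List ℕ} (hl : IsStrictList l)
include hl

lemma index_add_getD_le {i j : ℕ} (hij : i ≤ j) (hj : j < l.length) :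
    j + l.getD j 0 ≤ i + l.getD i 0 := by
  induction j, hij using Nat.le_induction with
  | base => rfl
  | succ j hij ih =>
    have step : l.getD (j + 1) 0 < l.getD j 0 := by
      rw [List.getD_eq_getElem _ _ hj, List.getD_eq_getElem _ _ (by omega)]
      exact List.isChain_iff_getElem.mp hl.1 j hj
    have := ih (by omega)
    omega

lemma getD_pos {i : ℕ} (hi : i < l.length) : 0 < l.getD i 0 := by
  rw [List.getD_eq_getElem _ _ hi]
  exact hl.2 _ (l.getElem_mem hi)

lemma length_le_index_add_getD {i : ℕ} (hi : i < l.length) : l.length ≤ i + l.getD i 0 := by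
  have := hl.index_add_getD_le (i := i) (j := l.length - 1) (by omega) (by omega)
  have := hl.getD_pos (i := l.length - 1) (by omega)
  omega

end IsStrictList

section DoubledPartition

variable {l : List ℕ}

lemma doubledP_getD_of_lt {i : ℕ} (hi : i < l.length) :
    (doubledP l).getD i 0 = l.getD i 0 + i + 1 := by
  rw [doubledP, List.getD_append _ _ _ _ (by simpa using hi),
    List.getD_eq_getElem _ _ (by simpa using hi)]
  simp

lemma doubledP_getD_of_le {i : ℕ} (hi : l.length ≤ i) (hi' : i < l.getD 0 0) :
    (doubledP l).getD i 0 = Nat.count (fun c => i < c + l.getD c 0) l.length := by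
  rw [doubledP, List.getD_append_right _ _ _ _ (by simpa using hi), List.headD_eq_getD,
    List.getD_eq_getElem _ _ (by simp only [List.length_map, List.length_range]; omega)]
  simp only [List.length_map, List.length_range, List.getElem_map, List.getElem_range, Nat.count,
    List.countP_eq_length_filter]
  congr 2
  funext x
  simp only [decide_eq_decide]
  omega

lemma colLen_doubledP (c : ℕ) :
    colLen (doubledP l) c = Nat.count (fun i => c < l.getD i 0 + i + 1) l.length +
      Nat.count (fun k => c < Nat.count (fun c' => l.length + k + 1 ≤ c' + l.getD c' 0) l.length)
        (l.getD 0 0 - l.length) := by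
  rw [doubledP, colLen_append, colLen_map_range, colLen_map_range, List.headD_eq_getD]
  simp only [Nat.count, List.countP_eq_length_filter]

lemma colLen_doubledP_of_gt {c : ℕ} (hc : l.length < c) :
    colLen (doubledP l) c = Nat.count (fun i => c < l.getD i 0 + i + 1) l.length := by
  have hlower : Nat.count (fun k => c < Nat.count (fun c' => l.length + k + 1 ≤ c' + l.getD c' 0)
      l.length) (l.getD 0 0 - l.length) = 0 :=
    Nat.count_iff_forall_not.mpr fun k _ => by
      have := Nat.count_le (p := fun c' => l.length + k + 1 ≤ c' + l.getD c' 0) (n := l.length)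
      omega
  rw [colLen_doubledP, hlower, add_zero]

lemma handContent_doubledP {i : ℕ} (hi : i < l.length) :
    handContent (doubledP l) i = l.getD i 0 := by
  rw [handContent, doubledP_getD_of_lt hi]
  push_cast
  ring

lemma handContent_doubledP_pred {c : ℕ} (hc : l.length < c) (hc' : c ≤ l.getD 0 0) :
    handContent (doubledP l) (c - 1) = 1 - footContent (doubledP l) c := by
  have hpred : ∀ i, c - 1 < i + l.getD i 0 ↔ c < l.getD i 0 + i + 1 := fun i => by omega
  rw [handContent, footContent, doubledP_getD_of_le (by omega) (by omega), colLen_doubledP_of_gt hc]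
  simp only [hpred]
  omega

variable (hl : IsStrictList l)
include hl

lemma doubledP_length (hm : 0 < l.length) : (doubledP l).length = l.getD 0 0 := by
  have := hl.length_le_index_add_getD hm
  simp only [doubledP, List.length_append, List.length_map, List.length_range, List.headD_eq_getD]
  omega

lemma colLen_doubledP_of_lt {c : ℕ} (hc : c < l.length) :
    colLen (doubledP l) c = l.getD c 0 + c := by
  have hcount : ∀ k, c < Nat.count (fun c' => l.length + k + 1 ≤ c' + l.getD c' 0) l.length ↔
      k < c + l.getD c 0 - l.length := fun k => by
    rw [Nat.lt_count_iff_of_downward_closed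
      (fun x y hxy hy h => h.trans (hl.index_add_getD_le hxy hy)) hc]
    omega
  have hrows : Nat.count (fun i => c < l.getD i 0 + i + 1) l.length = l.length :=
    Nat.count_iff_forall.mpr fun i hi => by
      rcases le_or_gt c i with hci | hic
      · omega
      · have := hl.index_add_getD_le hic.le hc
        omega
  have := hl.length_le_index_add_getD hc
  have := hl.index_add_getD_le (Nat.zero_le c) hc
  simp only [colLen_doubledP, hrows, hcount]
  rw [Nat.count_lt_eq_of_le (by omega)]
  omega

lemma footContent_doubledP {i : ℕ} (hi : i < l.length) :
    footContent (doubledP l) i = 1 - l.getD i 0 := by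
  rw [footContent, colLen_doubledP_of_lt hl hi]
  push_cast
  ring

lemma lt_colLen_doubledP {r c : ℕ} (hr : r < l.length) (hrc : r < c) (hcm : c ≠ l.length)
    (hc : c < (doubledP l).getD r 0) : r < colLen (doubledP l) c := by
  rcases lt_or_gt_of_ne hcm with hcm | hcm
  · rw [colLen_doubledP_of_lt hl hcm]
    omega
  · rw [colLen_doubledP_of_gt hcm, Nat.lt_count_iff_of_downward_closed
      (fun x y hxy hy h => by have := hl.index_add_getD_le hxy hy; omega) hr,
      ← doubledP_getD_of_lt hr]
    exact hc

lemma exists_conjugate_row {r c : ℕ} (hr : r < l.length) (hrc : r < c) (hcm : c ≠ l.length)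
    (hc : c < (doubledP l).getD r 0) :
    ∃ r', r' < (doubledP l).length ∧ r < r' ∧ c ≤ r' + 1 ∧ r' < colLen (doubledP l) r ∧
      handContent (doubledP l) r' = 1 - footContent (doubledP l) c := by
  rw [doubledP_getD_of_lt hr] at hc
  rw [colLen_doubledP_of_lt hl hr, doubledP_length hl (by omega)]
  have := hl.index_add_getD_le (Nat.zero_le r) hr
  have := hl.length_le_index_add_getD hr
  rcases lt_or_gt_of_ne hcm with hcm | hcm
  · refine ⟨c, by omega, hrc, by omega, by omega, ?_⟩
    rw [handContent_doubledP hcm, footContent_doubledP hl hcm]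
    ring
  · exact ⟨c - 1, by omega, by omega, by omega, by omega,
      handContent_doubledP_pred hcm (by omega)⟩

end DoubledPartition

theorem conjugate_hook_general (d : ℕ) (l : List ℕ) (hl : IsStrictList l)
    (r c : ℕ) (hr : r < l.length) (hrc : r < c) (hcm : c ≠ l.length)
    (hc : c < (doubledP l).getD r 0) :
    ∃ r' c', r' < (doubledP l).length ∧ c' < (doubledP l).getD r' 0 ∧ c' < r' ∧
      hookLen (doubledP l) r' c' = hookLen (doubledP l) r c ∧
      ∀ i j : ZMod d, handRes d (doubledP l) r = i → footRes d (doubledP l) c = j + 1 →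
        handRes d (doubledP l) r' = -j ∧ footRes d (doubledP l) c' = -i + 1 := by
  have hcol := lt_colLen_doubledP hl hr hrc hcm hc
  have hdiag : footContent (doubledP l) r = 1 - handContent (doubledP l) r := by
    rw [footContent_doubledP hl hr, handContent_doubledP hr]
  obtain ⟨r', hlen, hrr', hcr', hr'col, hhand⟩ := exists_conjugate_row hl hr hrc hcm hc
  have hcell : r < (doubledP l).getD r' 0 := by
    unfold handContent footContent at hhand
    omega
  exact ⟨r', r, hlen, hcell, hrr', hookLen_eq_of_contents_conj hc hcol hcell hr'col hhand hdiag,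
    handRes_footRes_of_contents_conj d hhand hdiag⟩

/-- every hook of `D(λ)` at a cell `(r, c)` with `r < c`, `r < m`, `c ≠ m`
(a bar of `λ` that is not a part nor a diagonal hook) has a counterpart below the diagonal
of the same length, whose hand/foot `d`-residues are as stated: if the hand residue is `i`
and the foot residue is `j + 1`, then the counterpart has hand residue `-j = d - j` and
foot residue `-i + 1 = (d - i) + 1` (mod `d`). -/
theorem conjugate_hook (d : ℕ) (hd : Odd d) (h3 : 3 ≤ d) (l : List ℕ) (hl : IsStrictList l)
    (r c : ℕ) (hr : r < l.length) (hrc : r < c) (hcm : c ≠ l.length)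
    (hc : c < (doubledP l).getD r 0) :
    ∃ r' c', r' < (doubledP l).length ∧ c' < (doubledP l).getD r' 0 ∧ c' < r' ∧
      hookLen (doubledP l) r' c' = hookLen (doubledP l) r c ∧
      ∀ i j : ZMod d, handRes d (doubledP l) r = i → footRes d (doubledP l) c = j + 1 →
        handRes d (doubledP l) r' = -j ∧ footRes d (doubledP l) c' = -i + 1 :=
  conjugate_hook_general d l hl r c hr hrc hcm hc

end BarPartitions
end

section
/- Let d ≥ 3 be odd and λ a strict partition with d̄-core c̄_d(λ). Then the multiset of bar lengths of c̄_d(λ) is a sub-multiset of the multiset of bar lengths of λ: B(c̄_d(λ)) ⊆ B(λ). -/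
/-!
Encode a strict partition `X` by its doubled abacus `W = X ∪ {-n : n ∉ X} ⊆ ℤ`. Bars of length `v`
correspond to unordered pairs `{w, v - w} ⊆ W` with `w ≠ v - w`; so, up to the fixed point
`w = v / 2`, the positions `w` with `w, v - w ∈ W` are twice as many as the bars of length `v`.

Sort these positions by the runner `j ≡ w (mod d)`. On each runner, their number minus the number
of positions with `w, v - w ∉ W` is determined by the differences
`#{a ∈ X : a ≡ i} - #{a ∈ X : a ≡ -i}` for `i = j, v - j`, and removing a bar of length divisible
by `d` does not change these. In a `d̄`-core no runner carries positions of both kinds, since a bead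
above a gap on one runner gives a removable bar (the oddness of `d` handles the pair `{x, -x}`). So
on every runner the core has at most as many positions of the first kind as `λ`.
-/

namespace BarPartitions

open Finset

def IsBead (X : Finset ℕ) (w : ℤ) : Prop := if 0 < w then w.toNat ∈ X else w.natAbs ∉ X

instance (X : Finset ℕ) : DecidablePred (IsBead X) := fun w => by
  unfold IsBead; infer_instance

section Abacus

variable {X : Finset ℕ}

lemma isBead_of_pos {w : ℤ} (hw : 0 < w) : IsBead X w ↔ w.toNat ∈ X := by
  simp [IsBead, hw]

lemma isBead_of_nonpos {w : ℤ} (hw : w ≤ 0) : IsBead X w ↔ w.natAbs ∉ X := by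
  simp [IsBead, hw.not_gt]

lemma isBead_natCast {n : ℕ} (hn : 0 < n) : IsBead X n ↔ n ∈ X := by
  simp [isBead_of_pos (Int.natCast_pos.2 hn)]

lemma isBead_neg_natCast (n : ℕ) : IsBead X (-n) ↔ n ∉ X := by
  simp [isBead_of_nonpos (neg_nonpos.2 (Int.natCast_nonneg n))]

lemma le_of_isBead {M : ℕ} (hM : ∀ a ∈ X, a ≤ M) {w : ℤ} (hw : IsBead X w) (hw0 : 0 < w) :
    w ≤ M := by
  have := hM _ ((isBead_of_pos hw0).1 hw)
  omega

lemma isBead_sub_iff (h0 : 0 ∉ X) {a : ℕ} (ha : a ∈ X) (v : ℕ) :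
    IsBead X (v - a) ∧ (v : ℤ) - a < a ↔
      (0 < v ∧ v ≤ a ∧ a - v ∉ X) ∨ ∃ b ∈ X, b < a ∧ a + b = v := by
  have ha0 : 0 < a := Nat.pos_of_ne_zero fun h => h0 (h ▸ ha)
  rcases le_or_gt v a with hva | hva
  · rw [isBead_of_nonpos (by omega), show ((v : ℤ) - a).natAbs = a - v by omega]
    have hb : ¬ ∃ b ∈ X, b < a ∧ a + b = v := by
      rintro ⟨b, hb, -, rfl⟩
      exact h0 (by rwa [show b = 0 by omega] at hb)
    rcases v.eq_zero_or_pos with rfl | hv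
    · simp [ha, ha0.ne']
    · simp only [hb, or_false]
      exact ⟨fun h => ⟨hv, hva, h.1⟩, fun h => ⟨h.2.2, by omega⟩⟩
  · rw [isBead_of_pos (by omega), show ((v : ℤ) - a).toNat = v - a by omega]
    constructor
    · rintro ⟨hX, hlt⟩
      exact Or.inr ⟨v - a, hX, by omega, by omega⟩
    · rintro (h | ⟨b, hb, hba, rfl⟩)
      · omega
      · exact ⟨by simpa using hb, by omega⟩

lemma count_bars_of_part (h0 : 0 ∉ X) {a : ℕ} (ha : a ∈ X) (v : ℕ) :
    ((Multiset.range a).map (· + 1) |>.filter (fun h => a - h ∉ X)).count v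
      + ((X.filter (· < a)).val.map (a + ·)).count v
      = if IsBead X (v - a) ∧ (v : ℤ) - a < a then 1 else 0 := by
  have hF : ((Multiset.range a).map (· + 1) |>.filter (fun h => a - h ∉ X)).Nodup :=
    ((Multiset.nodup_range a).map (add_left_injective 1)).filter _
  have hG : ((X.filter (· < a)).val.map (a + ·)).Nodup :=
    (X.filter (· < a)).nodup.map (add_right_injective a)
  rw [Multiset.count_eq_of_nodup hF, Multiset.count_eq_of_nodup hG]
  have hmem : IsBead X (v - a) ∧ (v : ℤ) - a < a ↔
      v ∈ ((Multiset.range a).map (· + 1) |>.filter (fun h => a - h ∉ X)) ∨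
        v ∈ (X.filter (· < a)).val.map (a + ·) := by
    rw [isBead_sub_iff h0 ha]
    simp only [Multiset.mem_filter, Multiset.mem_map, Multiset.mem_range, Finset.mem_val,
      Finset.mem_filter, and_assoc]
    exact or_congr_left ⟨fun ⟨_, hva, h⟩ => ⟨⟨v - 1, by omega, by omega⟩, h⟩,
      fun ⟨⟨_, _, _⟩, h⟩ => ⟨by omega, by omega, h⟩⟩
  have hdisj : ¬ (v ∈ ((Multiset.range a).map (· + 1) |>.filter (fun h => a - h ∉ X)) ∧
      v ∈ (X.filter (· < a)).val.map (a + ·)) := by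
    simp only [Multiset.mem_filter, Multiset.mem_map, Multiset.mem_range, Finset.mem_val,
      Finset.mem_filter]
    rintro ⟨⟨⟨x, hx, rfl⟩, -⟩, ⟨b, ⟨hb, -⟩, hab⟩⟩
    exact h0 (by rwa [show b = 0 by omega] at hb)
  simp only [hmem]
  split_ifs <;> tauto

lemma count_barMultisetF (h0 : 0 ∉ X) (v : ℕ) :
    (barMultisetF X).count v = #(X.filter fun a : ℕ => IsBead X (v - a) ∧ (v : ℤ) - a < a) := by
  rw [barMultisetF, ← Multiset.bind_add, Multiset.count_bind, card_filter, sum_eq_multiset_sum]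
  exact congrArg Multiset.sum <| Multiset.map_congr rfl fun a ha => by
    rw [Multiset.count_add, count_bars_of_part h0 ha]

noncomputable def beadPairs (X : Finset ℕ) (v M : ℕ) : Finset ℤ :=
  {w ∈ Icc (-(M : ℤ)) M | IsBead X w ∧ IsBead X (v - w)}

lemma card_beadPairs_bounds (h0 : 0 ∉ X) {v M : ℕ} (hM : ∀ a ∈ X, a ≤ M) :
    2 * (barMultisetF X).count v ≤ #(beadPairs X v M) ∧
      #(beadPairs X v M) ≤ 2 * (barMultisetF X).count v + 1 := by
  set P := beadPairs X v M
  have hupper : #{w ∈ P | (v : ℤ) - w < w} = (barMultisetF X).count v := by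
    rw [count_barMultisetF h0]
    refine card_nbij' Int.toNat (fun a => (a : ℤ)) ?_ ?_ ?_ ?_
    · intro w hw
      simp only [P, beadPairs, mem_coe, mem_filter, mem_Icc] at hw ⊢
      have hw0 : 0 < w := by omega
      refine ⟨(isBead_of_pos hw0).1 hw.1.2.1, ?_⟩
      rw [Int.toNat_of_nonneg hw0.le]
      exact ⟨hw.1.2.2, hw.2⟩
    · intro a ha
      simp only [P, beadPairs, mem_coe, mem_filter, mem_Icc] at ha ⊢
      have ha0 : 0 < a := Nat.pos_of_ne_zero fun h => h0 (h ▸ ha.1)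
      have := hM a ha.1
      exact ⟨⟨⟨by omega, by omega⟩, (isBead_natCast ha0).2 ha.1, ha.2.1⟩, ha.2.2⟩
    · intro w hw
      simp only [P, beadPairs, mem_coe, mem_filter, mem_Icc] at hw
      exact Int.toNat_of_nonneg (by omega)
    · intro a _
      simp
  have hlower : #{w ∈ P | w < (v : ℤ) - w} = #{w ∈ P | (v : ℤ) - w < w} := by
    refine card_nbij' (fun w => v - w) (fun w => v - w) ?_ ?_ ?_ ?_
    all_goals
      intro w hw
      simp only [P, beadPairs, mem_coe, mem_filter, mem_Icc] at hw ⊢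
    · have hvw := le_of_isBead hM hw.1.2.2 (by omega)
      refine ⟨⟨⟨by omega, by omega⟩, hw.1.2.2, by simpa using hw.1.2.1⟩, by omega⟩
    · refine ⟨⟨⟨by omega, by omega⟩, hw.1.2.2, by simpa using hw.1.2.1⟩, by omega⟩
    · ring
    · ring
  have hmid : #{w ∈ P | 2 * w = (v : ℤ)} ≤ 1 :=
    card_le_one.2 fun a ha b hb => by simp only [mem_filter] at ha hb; omega
  have hdisj : Disjoint {w ∈ P | (v : ℤ) - w < w} {w ∈ P | w < (v : ℤ) - w} :=
    disjoint_filter.2 fun w _ h₁ h₂ => by omega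
  have hcover : P ⊆
      {w ∈ P | (v : ℤ) - w < w} ∪ {w ∈ P | w < (v : ℤ) - w} ∪ {w ∈ P | 2 * w = (v : ℤ)} := by
    intro w hw
    simp only [mem_union, mem_filter, hw, true_and]
    omega
  constructor
  · calc 2 * (barMultisetF X).count v
        = #({w ∈ P | (v : ℤ) - w < w} ∪ {w ∈ P | w < (v : ℤ) - w}) := by
          rw [card_union_of_disjoint hdisj, hlower, hupper, two_mul]
      _ ≤ #P := card_le_card (union_subset (filter_subset _ _) (filter_subset _ _))
  · calc #P
        ≤ #{w ∈ P | (v : ℤ) - w < w} + #{w ∈ P | w < (v : ℤ) - w} + #{w ∈ P | 2 * w = (v : ℤ)} :=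
          (card_le_card hcover).trans <| (card_union_le _ _).trans <|
            Nat.add_le_add_right (card_union_le _ _) _
      _ ≤ 2 * (barMultisetF X).count v + 1 := by omega

end Abacus

section Charge

variable {d : ℕ}

def runnerWeight (j : ZMod d) (a : ℕ) : ℤ :=
  (if (a : ZMod d) = j then 1 else 0) - if (a : ZMod d) = -j then 1 else 0

/-- Up to a constant depending only on the window, the number of beads on runner `j` of the
doubled abacus of `X`. -/
def runnerCharge (d : ℕ) (X : Finset ℕ) (j : ZMod d) : ℤ := ∑ a ∈ X, runnerWeight j a

lemma runnerWeight_add_eq_zero (j : ZMod d) {a b : ℕ} (h : ((a + b : ℕ) : ZMod d) = 0) :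
    runnerWeight j a + runnerWeight j b = 0 := by
  rw [Nat.cast_add, add_eq_zero_iff_eq_neg] at h
  simp only [runnerWeight, h, neg_eq_iff_eq_neg, neg_neg]
  split_ifs <;> simp

lemma runnerWeight_eq_zero (j : ZMod d) {a : ℕ} (h : (a : ZMod d) = 0) : runnerWeight j a = 0 := by
  simp only [runnerWeight, h, eq_comm (a := (0 : ZMod d)), neg_eq_zero, sub_self]

lemma runnerWeight_sub (j : ZMod d) {a h : ℕ} (hh : (h : ZMod d) = 0) (hle : h ≤ a) :
    runnerWeight j (a - h) = runnerWeight j a := by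
  simp only [runnerWeight, Nat.cast_sub hle, hh, sub_zero]

lemma runnerCharge_eq_of_removeDBar {s t : Finset ℕ} (hst : RemoveDBar d s t) (j : ZMod d) :
    runnerCharge d t j = runnerCharge d s j := by
  obtain ⟨h, hdh, ⟨a, ha, b, hb, hab, rfl, rfl⟩ | ⟨a, ha, -, hle, hfree, rfl⟩⟩ := hst
  · rw [runnerCharge, runnerCharge, ← add_sum_erase s _ ha,
      ← add_sum_erase (s.erase a) _ (mem_erase.2 ⟨hab.symm, hb⟩), ← add_assoc,
      runnerWeight_add_eq_zero j ((ZMod.natCast_eq_zero_iff _ _).2 hdh), zero_add]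
  · have hh : (h : ZMod d) = 0 := (ZMod.natCast_eq_zero_iff _ _).2 hdh
    split_ifs with hha
    · subst hha
      rw [runnerCharge, runnerCharge, ← add_sum_erase s _ ha, runnerWeight_eq_zero j hh, zero_add]
    · rw [runnerCharge, runnerCharge, sum_insert fun h => hfree (mem_of_mem_erase h),
        ← add_sum_erase s _ ha, runnerWeight_sub j hh hle]

lemma runnerCharge_eq_of_reflTransGen {s t : Finset ℕ}
    (hst : Relation.ReflTransGen (RemoveDBar d) s t) (j : ZMod d) :
    runnerCharge d t j = runnerCharge d s j := by
  induction hst with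
  | refl => rfl
  | tail _ hstep ih => rw [runnerCharge_eq_of_removeDBar hstep, ih]

lemma zero_notMem_of_removeBarLen {h : ℕ} {s t : Finset ℕ} (hs : 0 ∉ s)
    (hst : RemoveBarLen h s t) : 0 ∉ t := by
  obtain ⟨a, -, b, -, -, -, rfl⟩ | ⟨a, -, -, hle, -, rfl⟩ := hst
  · exact fun h => hs (mem_of_mem_erase (mem_of_mem_erase h))
  · split_ifs with hha
    · exact fun h => hs (mem_of_mem_erase h)
    · simp only [mem_insert, mem_erase, not_or]
      exact ⟨by omega, fun h => hs h.2⟩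

lemma zero_notMem_of_reflTransGen {s t : Finset ℕ} (hs : 0 ∉ s)
    (hst : Relation.ReflTransGen (RemoveDBar d) s t) : 0 ∉ t := by
  induction hst with
  | refl => exact hs
  | tail _ hstep ih => exact zero_notMem_of_removeBarLen ih hstep.choose_spec.2

end Charge

section Runners

variable {d : ℕ} {X : Finset ℕ}

def onRunner (j : ZMod d) (S : Finset ℤ) : Finset ℤ := S.filter fun w => (w : ZMod d) = j

lemma onRunner_filter (j : ZMod d) (S : Finset ℤ) (p : ℤ → Prop) [DecidablePred p] :
    onRunner j (S.filter p) = (onRunner j S).filter p :=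
  filter_comm _ _ _

lemma card_eq_sum_card_onRunner [NeZero d] (S : Finset ℤ) : #S = ∑ j, #(onRunner (d := d) j S) :=
  card_eq_sum_card_fiberwise fun _ _ => mem_univ _

lemma card_pos_beads_on_runner (h0 : 0 ∉ X) {hi : ℤ} (hX : ∀ a ∈ X, (a : ℤ) ≤ hi) (j : ZMod d) :
    #(onRunner j ((Ioc 0 hi).filter (IsBead X))) = #(X.filter fun a : ℕ => (a : ZMod d) = j) := by
  refine card_nbij' Int.toNat (fun a => (a : ℤ)) ?_ ?_ ?_ ?_
  · intro w hw
    simp only [onRunner, mem_coe, mem_filter, mem_Ioc] at hw ⊢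
    refine ⟨(isBead_of_pos hw.1.1.1).1 hw.1.2, ?_⟩
    rw [← hw.2, ← Int.cast_natCast, Int.toNat_of_nonneg hw.1.1.1.le]
  · intro a ha
    simp only [onRunner, mem_coe, mem_filter, mem_Ioc, Int.cast_natCast] at ha ⊢
    have ha0 : 0 < a := Nat.pos_of_ne_zero fun h => h0 (h ▸ ha.1)
    exact ⟨⟨⟨by omega, hX a ha.1⟩, (isBead_natCast ha0).2 ha.1⟩, ha.2⟩
  · intro w hw
    simp only [onRunner, mem_coe, mem_filter, mem_Ioc] at hw
    exact Int.toNat_of_nonneg hw.1.1.1.le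
  · intro a _
    simp

lemma card_nonpos_beads_on_runner {lo : ℤ} (hX : ∀ a ∈ X, lo ≤ -(a : ℤ)) (j : ZMod d) :
    #(onRunner j ((Icc lo 0).filter (IsBead X))) + #(X.filter fun a : ℕ => (a : ZMod d) = -j)
      = #(onRunner j (Icc lo 0)) := by
  have hgaps : #(onRunner j ((Icc lo 0).filter fun w => ¬ IsBead X w))
      = #(X.filter fun a : ℕ => (a : ZMod d) = -j) := by
    refine card_nbij' Int.natAbs (fun a => -(a : ℤ)) ?_ ?_ ?_ ?_
    · intro w hw
      simp only [onRunner, mem_coe, mem_filter, mem_Icc] at hw ⊢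
      refine ⟨not_not.1 ((isBead_of_nonpos hw.1.1.2).not.1 hw.1.2), ?_⟩
      rw [← hw.2, ← Int.cast_natCast, Int.natCast_natAbs, abs_of_nonpos hw.1.1.2, Int.cast_neg]
    · intro a ha
      simp only [onRunner, mem_coe, mem_filter, mem_Icc, Int.cast_neg, Int.cast_natCast] at ha ⊢
      exact ⟨⟨⟨hX a ha.1, by omega⟩, by simpa [isBead_neg_natCast] using ha.1⟩,
        by rw [ha.2, neg_neg]⟩
    · intro w hw
      simp only [onRunner, mem_coe, mem_filter, mem_Icc] at hw
      show -((w.natAbs : ℕ) : ℤ) = w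
      omega
    · intro a _
      simp
  rw [← hgaps, onRunner_filter, onRunner_filter, card_filter_add_card_filter_not]

lemma runnerCharge_eq_card_sub_card (j : ZMod d) :
    runnerCharge d X j
      = #(X.filter fun a : ℕ => (a : ZMod d) = j) - #(X.filter fun a : ℕ => (a : ZMod d) = -j) := by
  simp only [runnerCharge, runnerWeight, sum_sub_distrib, natCast_card_filter]

lemma card_beads_on_runner (h0 : 0 ∉ X) {lo hi : ℤ} (hlo : lo ≤ 0) (hhi : 0 ≤ hi)
    (hX : ∀ a ∈ X, lo ≤ -(a : ℤ) ∧ (a : ℤ) ≤ hi) (j : ZMod d) :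
    (#(onRunner j ((Icc lo hi).filter (IsBead X))) : ℤ)
      = runnerCharge d X j + #(onRunner j (Icc lo 0)) := by
  have hsplit : onRunner j ((Icc lo hi).filter (IsBead X))
      = onRunner j ((Icc lo 0).filter (IsBead X)) ∪ onRunner j ((Ioc 0 hi).filter (IsBead X)) := by
    ext w
    simp only [onRunner, mem_union, mem_filter, mem_Icc, mem_Ioc]
    constructor
    · rintro ⟨⟨hw, hb⟩, hj⟩
      by_cases hw0 : w ≤ 0
      · exact Or.inl ⟨⟨⟨hw.1, hw0⟩, hb⟩, hj⟩
      · exact Or.inr ⟨⟨⟨by omega, hw.2⟩, hb⟩, hj⟩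
    · rintro (⟨⟨hw, hb⟩, hj⟩ | ⟨⟨hw, hb⟩, hj⟩)
      · exact ⟨⟨⟨hw.1, by omega⟩, hb⟩, hj⟩
      · exact ⟨⟨⟨by omega, hw.2⟩, hb⟩, hj⟩
  have hdisj : Disjoint (onRunner j ((Icc lo 0).filter (IsBead X)))
      (onRunner j ((Ioc 0 hi).filter (IsBead X))) :=
    disjoint_left.2 fun w h₁ h₂ => by
      simp only [onRunner, mem_filter, mem_Icc, mem_Ioc] at h₁ h₂
      omega
  have hneg := card_nonpos_beads_on_runner (fun a ha => (hX a ha).1) j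
  rw [hsplit, card_union_of_disjoint hdisj, card_pos_beads_on_runner h0 (fun a ha => (hX a ha).2),
    runnerCharge_eq_card_sub_card, ← hneg]
  push_cast
  ring

noncomputable def gapPairs (X : Finset ℕ) (v M : ℕ) : Finset ℤ :=
  {w ∈ Icc (-(M : ℤ)) M | ¬ IsBead X w ∧ ¬ IsBead X (v - w)}

lemma card_onRunner_beadPairs_add (X : Finset ℕ) (v M : ℕ) (j : ZMod d) :
    #(onRunner j (beadPairs X v M)) + #(onRunner j (Icc (-(M : ℤ)) M))
      = #(onRunner j ((Icc (-(M : ℤ)) M).filter (IsBead X)))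
        + #(onRunner j ((Icc (-(M : ℤ)) M).filter fun w => IsBead X (v - w)))
        + #(onRunner j (gapPairs X v M)) := by
  simp only [onRunner, beadPairs, gapPairs, filter_filter, card_filter, ← sum_add_distrib]
  refine sum_congr rfl fun w _ => ?_
  by_cases h₁ : IsBead X w <;> by_cases h₂ : IsBead X (v - w) <;> simp [h₁, h₂]

lemma card_reflected_beads_on_runner (X : Finset ℕ) (v M : ℕ) (j : ZMod d) :
    #(onRunner j ((Icc (-(M : ℤ)) M).filter fun w => IsBead X (v - w)))
      = #(onRunner ((v : ZMod d) - j) ((Icc ((v : ℤ) - M) (v + M)).filter (IsBead X))) := by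
  refine card_nbij' (fun w => v - w) (fun w => v - w) ?_ ?_ ?_ ?_
  all_goals
    intro w hw
    simp only [onRunner, mem_coe, mem_filter, mem_Icc] at hw ⊢
  · refine ⟨⟨⟨by omega, by omega⟩, hw.1.2⟩, by push_cast; rw [hw.2]⟩
  · refine ⟨⟨⟨by omega, by omega⟩, by simpa using hw.1.2⟩, by push_cast; rw [hw.2]; ring⟩
  · ring
  · ring

lemma card_onRunner_beadPairs_sub_gapPairs (h0 : 0 ∉ X) {v M : ℕ} (hvM : v ≤ M)
    (hM : ∀ a ∈ X, a + v ≤ M) (j : ZMod d) :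
    (#(onRunner j (beadPairs X v M)) : ℤ) - #(onRunner j (gapPairs X v M))
      = runnerCharge d X j + runnerCharge d X (v - j)
        + (#(onRunner j (Icc (-(M : ℤ)) 0))
          + #(onRunner ((v : ZMod d) - j) (Icc ((v : ℤ) - M) 0))
          - #(onRunner j (Icc (-(M : ℤ)) M))) := by
  have hcount := card_onRunner_beadPairs_add X v M j
  rw [card_reflected_beads_on_runner] at hcount
  have hdirect := card_beads_on_runner (d := d) h0 (lo := -(M : ℤ)) (hi := M) (by omega)
    (by omega) (fun a ha => by have := hM a ha; omega) j
  have hreflected := card_beads_on_runner (d := d) h0 (lo := (v : ℤ) - M) (hi := v + M) (by omega)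
    (by omega) (fun a ha => by have := hM a ha; omega) ((v : ZMod d) - j)
  omega

end Runners

section Core

variable {d : ℕ} {c : Finset ℕ}

lemma exists_removeDBar_of_bead_above_gap (hd : Odd d) (h0 : 0 ∉ c) {x y : ℤ} (hx : IsBead c x)
    (hy : ¬ IsBead c y) (hyx : y < x) (hxy : (x : ZMod d) = y) : ∃ t, RemoveDBar d c t := by
  have hdvd : d ∣ (x - y).natAbs :=
    Int.natCast_dvd.1 ((ZMod.intCast_eq_intCast_iff_dvd_sub y x d).1 hxy.symm)
  rcases le_or_gt y 0 with hy0 | hy0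
  · have hyc : y.natAbs ∈ c := by rwa [isBead_of_nonpos hy0, not_not] at hy
    rcases le_or_gt x 0 with hx0 | hx0
    · have hxc : x.natAbs ∉ c := (isBead_of_nonpos hx0).1 hx
      refine ⟨_, _, hdvd, Or.inr ⟨y.natAbs, hyc, by omega, by omega, ?_, rfl⟩⟩
      rwa [show y.natAbs - (x - y).natAbs = x.natAbs by omega]
    · have hxc : x.toNat ∈ c := (isBead_of_pos hx0).1 hx
      by_cases hsym : x.toNat = y.natAbs
      · -- `x = -y`: the bar is the part `x` itself, as `d ∣ 2x` forces `d ∣ x`.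
        have hdx : d ∣ x.toNat := hd.coprime_two_right.dvd_of_dvd_mul_left <| by
          rwa [show (x - y).natAbs = 2 * x.toNat by omega] at hdvd
        exact ⟨_, _, hdx, Or.inr ⟨x.toNat, hxc, by omega, le_rfl, by simpa using h0, rfl⟩⟩
      · exact ⟨_, _, hdvd, Or.inl ⟨x.toNat, hxc, y.natAbs, hyc, hsym, by omega, rfl⟩⟩
  · have hyc : y.toNat ∉ c := fun h => hy ((isBead_of_pos hy0).2 h)
    have hxc : x.toNat ∈ c := (isBead_of_pos (hy0.trans hyx)).1 hx
    refine ⟨_, _, hdvd, Or.inr ⟨x.toNat, hxc, by omega, by omega, ?_, rfl⟩⟩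
    rwa [show x.toNat - (x - y).natAbs = y.toNat by omega]

lemma onRunner_beadPairs_eq_empty_or (hd : Odd d) (h0 : 0 ∉ c) (hcore : ∀ t, ¬ RemoveDBar d c t)
    (v M : ℕ) (j : ZMod d) :
    onRunner j (beadPairs c v M) = ∅ ∨ onRunner j (gapPairs c v M) = ∅ := by
  by_contra! h
  obtain ⟨⟨x, hx⟩, ⟨y, hy⟩⟩ := h
  simp only [onRunner, beadPairs, gapPairs, mem_filter] at hx hy
  rcases lt_trichotomy x y with hxy | rfl | hxy
  · exact (exists_removeDBar_of_bead_above_gap hd h0 hx.1.2.2 hy.1.2.2 (by omega)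
      (by push_cast; rw [hx.2, hy.2])).elim hcore
  · exact hy.1.2.1 hx.1.2.1
  · exact (exists_removeDBar_of_bead_above_gap hd h0 hx.1.2.1 hy.1.2.1 hxy
      (by rw [hx.2, hy.2])).elim hcore

lemma card_beadPairs_le_of_isBarCore (hd : Odd d) {s : Finset ℕ} (hs : 0 ∉ s)
    (hsc : IsBarCore d s c) {v M : ℕ} (hvM : v ≤ M) (hMs : ∀ a ∈ s, a + v ≤ M)
    (hMc : ∀ a ∈ c, a + v ≤ M) : #(beadPairs c v M) ≤ #(beadPairs s v M) := by
  have : NeZero d := ⟨hd.pos.ne'⟩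
  obtain ⟨hst, hcore⟩ := hsc
  have hc0 := zero_notMem_of_reflTransGen hs hst
  rw [card_eq_sum_card_onRunner (d := d) (beadPairs c v M),
    card_eq_sum_card_onRunner (d := d) (beadPairs s v M)]
  refine sum_le_sum fun j _ => ?_
  have hbal_s := card_onRunner_beadPairs_sub_gapPairs hs hvM hMs j
  have hbal_c := card_onRunner_beadPairs_sub_gapPairs hc0 hvM hMc j
  rw [runnerCharge_eq_of_reflTransGen hst, runnerCharge_eq_of_reflTransGen hst] at hbal_c
  rcases onRunner_beadPairs_eq_empty_or hd hc0 hcore v M j with h | h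
  · simp [h]
  · rw [h, card_empty] at hbal_c
    omega

end Core

theorem barMultiset_core_le_general (d : ℕ) (hd : Odd d) (s c : Finset ℕ)
    (hs : 0 ∉ s) (hc : IsBarCore d s c) :
    barMultisetF c ≤ barMultisetF s := by
  have hc0 := zero_notMem_of_reflTransGen hs hc.1
  refine Multiset.le_iff_count.2 fun v => ?_
  set M := s.sup id + c.sup id + v
  have hMs : ∀ a ∈ s, a + v ≤ M := fun a ha => by
    have : a ≤ s.sup id := le_sup (f := id) ha
    omega
  have hMc : ∀ a ∈ c, a + v ≤ M := fun a ha => by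
    have : a ≤ c.sup id := le_sup (f := id) ha
    omega
  have hpairs := card_beadPairs_le_of_isBarCore hd hs hc (by omega) hMs hMc
  have hc_bounds := card_beadPairs_bounds hc0 (v := v) fun a ha => (hMc a ha).trans' le_self_add
  have hs_bounds := card_beadPairs_bounds hs (v := v) fun a ha => (hMs a ha).trans' le_self_add
  omega

/-- the bar lengths of the `d̄`-core form a sub-multiset of those of `λ`. -/
theorem barMultiset_core_le (d : ℕ) (hd : Odd d) (h3 : 3 ≤ d) (s c : Finset ℕ)
    (hs : 0 ∉ s) (hc : IsBarCore d s c) :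
    barMultisetF c ≤ barMultisetF s :=
  barMultiset_core_le_general d hd s c hs hc

end BarPartitions
end

section
/- Let d ≥ 3 be odd and λ a strict partition. The number of bars of λ of length divisible by d equals the number of bars of the d̄-quotient partition q̄_d(λ) of length divisible by d, and indeed the multisets of their lengths coincide: {b ∈ B(λ) : d | b} = {b ∈ B(q̄_d(λ)) : d | b} as multisets. -/
namespace BarPartitions

/-! A bar of length `n` of a strict partition either shortens one part `a` to `a - n` or removes
two parts summing to `n`. For `n = d * m`, sort the parts by their residue modulo `d`: the parts on
runner `0` contribute the bars of length `m` of the strict partition they form, and for each pair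
of runners `(i, d - i)` the shortenings on either runner together with the pairs with one part on
each runner are exactly the `m`-hooks of the partition whose β-set is built from these two runners,
i.e. of the `i`-th component of the `d̄`-quotient. Since β-sets of the same partition differ only
by shifts, which preserve hooks, the number of bars of length `d * m` depends only on the
`d̄`-quotient. -/

open Finset

def betaShift (X : Finset ℕ) : Finset ℕ := insert 0 (X.image (· + 1))

/-- For a β-set, the number of `n`-hooks of its partition; for the part set of a strict partition,
the number of its bars of length `n` that shorten a single part. -/
def hookCount (X : Finset ℕ) (n : ℕ) : ℕ := #{x ∈ X | n ≤ x ∧ x - n ∉ X}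

def betaPartList (X : Finset ℕ) : List ℕ := X.sort.zipIdx.map fun p => p.1 - p.2

lemma partitionOfBetaSet_eq_filter (X : Finset ℕ) :
    partitionOfBetaSet X = (betaPartList X : Multiset ℕ).filter (0 < ·) := rfl

lemma zero_mem_betaShift (X : Finset ℕ) : 0 ∈ betaShift X := mem_insert_self _ _

lemma succ_mem_betaShift {X : Finset ℕ} {x : ℕ} : x + 1 ∈ betaShift X ↔ x ∈ X := by
  simp [betaShift]

lemma sort_betaShift (X : Finset ℕ) : (betaShift X).sort = 0 :: X.sort.map (· + 1) := by
  have himage : X.image (· + 1) = X.map (addRightEmbedding 1) := by ext; simp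
  rw [betaShift, sort_insert _ (fun _ _ => Nat.zero_le _) (by simp), himage,
    ← StrictMonoOn.map_finsetSort _ X fun _ _ _ _ h => by simpa using h]
  rfl

lemma betaPartList_betaShift (X : Finset ℕ) :
    betaPartList (betaShift X) = 0 :: betaPartList X := by
  simp [betaPartList, sort_betaShift, List.zipIdx_succ, List.zipIdx_map, Function.comp_def]

lemma partitionOfBetaSet_betaShift (X : Finset ℕ) :
    partitionOfBetaSet (betaShift X) = partitionOfBetaSet X := by
  simp [partitionOfBetaSet_eq_filter, betaPartList_betaShift]

lemma filter_betaShift {X : Finset ℕ} (p : ℕ → Prop) [DecidablePred p] (h0 : ¬ p 0) :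
    {x ∈ betaShift X | p x} = {x ∈ X | p (x + 1)}.image (· + 1) := by
  rw [betaShift, filter_insert, if_neg h0, filter_image]

lemma hookCount_betaShift (X : Finset ℕ) (n : ℕ) : hookCount (betaShift X) n = hookCount X n := by
  have hslide (x : ℕ) : (n ≤ x + 1 ∧ x + 1 - n ∉ betaShift X) ↔ (n ≤ x ∧ x - n ∉ X) := by
    rcases Nat.lt_or_ge x n with hx | hx
    · have := zero_mem_betaShift X
      rw [show x + 1 - n = 0 by omega]
      simp [hx, this]
    · rw [show x + 1 - n = x - n + 1 by omega, succ_mem_betaShift]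
      simp [hx, Nat.le_succ_of_le hx]
  have hzero : ¬ (n ≤ 0 ∧ 0 - n ∉ betaShift X) := by simp [zero_mem_betaShift]
  rw [hookCount, filter_betaShift _ hzero, card_image_of_injective _ (add_left_injective 1)]
  exact congrArg card (filter_congr fun x _ => hslide x)

lemma betaShift_image_pred_erase_zero {X : Finset ℕ} (h0 : 0 ∈ X) :
    betaShift ((X.erase 0).image (· - 1)) = X := by
  ext z
  rcases z with _ | z
  · simp [h0, zero_mem_betaShift]
  · rw [succ_mem_betaShift]
    simp only [mem_image, mem_erase]
    constructor
    · rintro ⟨a, ⟨ha0, haX⟩, rfl⟩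
      rwa [Nat.sub_add_cancel (Nat.one_le_iff_ne_zero.2 ha0)]
    · exact fun hz => ⟨z + 1, ⟨by omega, hz⟩, rfl⟩

lemma exists_eq_iterate_betaShift (X : Finset ℕ) : ∃ k Y, 0 ∉ Y ∧ X = betaShift^[k] Y := by
  induction hX : #X using Nat.strong_induction_on generalizing X with
  | _ n ih =>
  by_cases h0 : 0 ∈ X
  · have hcard : #((X.erase 0).image (· - 1)) < n :=
      hX ▸ card_image_le.trans_lt (card_erase_lt_of_mem h0)
    obtain ⟨k, Y, hY, hXY⟩ := ih _ hcard _ rfl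
    exact ⟨k + 1, Y, hY, by rw [Function.iterate_succ_apply', ← hXY,
      betaShift_image_pred_erase_zero h0]⟩
  · exact ⟨0, X, h0, rfl⟩

lemma sort_getElem_add_le (X : Finset ℕ) {i j : ℕ} (hij : i ≤ j) (hj : j < X.sort.length) :
    X.sort[i] + (j - i) ≤ X.sort[j] := by
  induction j, hij using Nat.le_induction with
  | base => simp
  | succ j hij ih =>
    have hlt : X.sort[j] < X.sort[j + 1] :=
      (sortedLT_sort X).getElem_lt_getElem_iff.2 (lt_add_one j)
    have := ih (by omega)
    omega

lemma lt_sort_getElem {X : Finset ℕ} (h0 : 0 ∉ X) {k : ℕ} (hk : k < X.sort.length) :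
    k < X.sort[k] := by
  have hpos : X.sort[0] ≠ 0 := fun h => h0 (h ▸ (mem_sort _).1 (List.getElem_mem _))
  have := sort_getElem_add_le X (Nat.zero_le k) hk
  omega

lemma length_betaPartList (X : Finset ℕ) : (betaPartList X).length = #X := by
  simp [betaPartList]

lemma getElem_betaPartList (X : Finset ℕ) {k : ℕ} (hk : k < (betaPartList X).length) :
    (betaPartList X)[k] = X.sort[k]'(by simpa [betaPartList] using hk) - k := by
  simp [betaPartList]

lemma sortedLE_betaPartList (X : Finset ℕ) : (betaPartList X).SortedLE := by
  refine List.sortedLE_of_getElem_le_getElem_of_le fun i j hi hj hij => ?_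
  rw [getElem_betaPartList, getElem_betaPartList]
  have := sort_getElem_add_le X hij (by simpa [betaPartList] using hj)
  omega

lemma partitionOfBetaSet_of_zero_notMem {X : Finset ℕ} (h0 : 0 ∉ X) :
    partitionOfBetaSet X = betaPartList X := by
  refine Multiset.filter_eq_self.2 fun v hv => ?_
  obtain ⟨k, hk, rfl⟩ := List.getElem_of_mem (l := betaPartList X) hv
  rw [getElem_betaPartList]
  exact Nat.sub_pos_of_lt (lt_sort_getElem h0 _)

lemma eq_of_partitionOfBetaSet_eq {X Y : Finset ℕ} (hX : 0 ∉ X) (hY : 0 ∉ Y)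
    (h : partitionOfBetaSet X = partitionOfBetaSet Y) : X = Y := by
  rw [partitionOfBetaSet_of_zero_notMem hX, partitionOfBetaSet_of_zero_notMem hY,
    Multiset.coe_eq_coe] at h
  have hparts := h.eq_of_sortedLE (sortedLE_betaPartList X) (sortedLE_betaPartList Y)
  have hsort : X.sort = Y.sort := by
    refine List.ext_getElem (by simpa [length_betaPartList] using congrArg List.length hparts)
      fun k hkX hkY => ?_
    have hk := getElem_betaPartList X (k := k) (by simpa [betaPartList] using hkX)
    rw [List.getElem_of_eq hparts, getElem_betaPartList] at hk
    have := lt_sort_getElem hX hkX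
    have := lt_sort_getElem hY hkY
    omega
  rw [← sort_toFinset X (· ≤ ·), hsort, sort_toFinset]

lemma hookCount_eq_of_partitionOfBetaSet_eq {X Y : Finset ℕ}
    (h : partitionOfBetaSet X = partitionOfBetaSet Y) (n : ℕ) : hookCount X n = hookCount Y n := by
  have hiter (k : ℕ) (Z : Finset ℕ) : partitionOfBetaSet (betaShift^[k] Z) = partitionOfBetaSet Z ∧
      hookCount (betaShift^[k] Z) n = hookCount Z n := by
    induction k with
    | zero => simp
    | succ k ih =>
      rw [Function.iterate_succ_apply', partitionOfBetaSet_betaShift, hookCount_betaShift]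
      exact ih
  obtain ⟨k, X₀, hX₀, rfl⟩ := exists_eq_iterate_betaShift X
  obtain ⟨l, Y₀, hY₀, rfl⟩ := exists_eq_iterate_betaShift Y
  rw [(hiter k X₀).1, (hiter l Y₀).1] at h
  rw [(hiter k X₀).2, (hiter l Y₀).2, eq_of_partitionOfBetaSet_eq hX₀ hY₀ h]

def pairBetaSet (N : ℕ) (A B : Finset ℕ) : Finset ℕ :=
  A.image (N + ·) ∪ {b ∈ range N | b ∉ B}.image (N - 1 - ·)

lemma barQuotComp_eq (d i : ℕ) (s : Finset ℕ) :
    barQuotComp d i s = partitionOfBetaSet (pairBetaSet ((runnerSet d (d - i) s).sup id + 1)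
      (runnerSet d i s) (runnerSet d (d - i) s)) :=
  rfl

def crossCount (A B : Finset ℕ) (n : ℕ) : ℕ := #{a ∈ A | a < n ∧ n - 1 - a ∈ B}

section PairBetaSet

variable {N : ℕ} {A B : Finset ℕ}

lemma add_mem_pairBetaSet {a : ℕ} : N + a ∈ pairBetaSet N A B ↔ a ∈ A := by
  simp only [pairBetaSet, mem_union, mem_image, mem_filter, mem_range]
  constructor
  · rintro (⟨a', ha', h⟩ | ⟨b, ⟨hb, -⟩, h⟩)
    · rwa [← Nat.add_left_cancel h]
    · omega
  · exact fun ha => Or.inl ⟨a, ha, rfl⟩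

lemma mem_pairBetaSet_of_lt {z : ℕ} (hz : z < N) : z ∈ pairBetaSet N A B ↔ N - 1 - z ∉ B := by
  simp only [pairBetaSet, mem_union, mem_image, mem_filter, mem_range]
  constructor
  · rintro (⟨a, -, h⟩ | ⟨b, ⟨hb, hbB⟩, rfl⟩)
    · omega
    · rwa [show N - 1 - (N - 1 - b) = b by omega]
  · exact fun hzB => Or.inr ⟨N - 1 - z, ⟨by omega, hzB⟩, by omega⟩

lemma card_filter_pairBetaSet (p : ℕ → Prop) [DecidablePred p] :
    #{x ∈ pairBetaSet N A B | p x} =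
      #{a ∈ A | p (N + a)} + #{b ∈ range N | b ∉ B ∧ p (N - 1 - b)} := by
  have hdisj : Disjoint (A.image (N + ·)) ({b ∈ range N | b ∉ B}.image (N - 1 - ·)) := by
    simp only [disjoint_left, mem_image, mem_filter, mem_range]
    rintro _ ⟨a, -, rfl⟩ ⟨b, ⟨hb, -⟩, h⟩
    omega
  rw [pairBetaSet, filter_union, card_union_of_disjoint (disjoint_filter_filter hdisj),
    filter_image, filter_image, card_image_of_injective _ (add_right_injective N),
    card_image_of_injOn, filter_filter]
  intro b hb b' hb' h
  simp only [coe_filter, mem_filter, mem_range] at hb hb' h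
  have := hb.1.1
  have := hb'.1.1
  omega

lemma hook_add_pairBetaSet_iff (hB : ∀ b ∈ B, b < N) (a n : ℕ) :
    (n ≤ N + a ∧ N + a - n ∉ pairBetaSet N A B) ↔
      (n ≤ a ∧ a - n ∉ A) ∨ (a < n ∧ n - 1 - a ∈ B) := by
  rcases Nat.lt_or_ge a n with han | han
  · by_cases hnN : n ≤ N + a
    · rw [mem_pairBetaSet_of_lt (by omega), show N - 1 - (N + a - n) = n - 1 - a by omega]
      simp [hnN, han, Nat.not_le.2 han]
    · have : n - 1 - a ∉ B := fun h => absurd (hB _ h) (by omega)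
      simp [hnN, this, Nat.not_le.2 han]
  · rw [show N + a - n = N + (a - n) by omega, add_mem_pairBetaSet]
    simp [han, Nat.not_lt.2 han, show n ≤ N + a by omega]

lemma hook_reflect_pairBetaSet_iff (hB : ∀ b ∈ B, b < N) {b : ℕ} (hb : b < N) (n : ℕ) :
    (n ≤ N - 1 - b ∧ N - 1 - b - n ∉ pairBetaSet N A B) ↔ b + n ∈ B := by
  constructor
  · rintro ⟨hn, hnot⟩
    rwa [mem_pairBetaSet_of_lt (by omega), show N - 1 - (N - 1 - b - n) = b + n by omega,
      not_not] at hnot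
  · intro hbn
    have := hB _ hbn
    refine ⟨by omega, ?_⟩
    rwa [mem_pairBetaSet_of_lt (by omega), show N - 1 - (N - 1 - b - n) = b + n by omega,
      not_not]

lemma card_gaps_add_mem_eq_hookCount (hB : ∀ b ∈ B, b < N) (n : ℕ) :
    #{b ∈ range N | b ∉ B ∧ b + n ∈ B} = hookCount B n := by
  refine card_nbij' (· + n) (· - n) ?_ ?_ (fun b _ => Nat.add_sub_cancel b n) ?_
  · intro b hb
    simp only [mem_coe, mem_filter, mem_range] at hb ⊢
    rw [Nat.add_sub_cancel]
    exact ⟨hb.2.2, Nat.le_add_left n b, hb.2.1⟩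
  · intro c hc
    simp only [mem_coe, mem_filter, mem_range] at hc ⊢
    rw [Nat.sub_add_cancel hc.2.1]
    exact ⟨hB _ hc.1 |>.trans_le' (Nat.sub_le c n), hc.2.2, hc.1⟩
  · intro c hc
    exact Nat.sub_add_cancel (mem_filter.1 hc).2.1

theorem hookCount_pairBetaSet (hB : ∀ b ∈ B, b < N) (n : ℕ) :
    hookCount (pairBetaSet N A B) n = hookCount A n + crossCount A B n + hookCount B n := by
  rw [hookCount, card_filter_pairBetaSet,
    filter_congr fun a _ => hook_add_pairBetaSet_iff hB a n, filter_or,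
    card_union_of_disjoint (disjoint_filter.2 fun a _ h1 h2 => absurd h1.1 (Nat.not_le.2 h2.1)),
    filter_congr fun b hb => and_congr_right fun _ =>
      hook_reflect_pairBetaSet_iff hB (mem_range.1 hb) n,
    card_gaps_add_mem_eq_hookCount hB]
  rfl

end PairBetaSet

def pairCount (t : Finset ℕ) (n : ℕ) : ℕ := #{a ∈ t | a ≤ n ∧ n - a < a ∧ n - a ∈ t}

theorem count_barMultisetF_s9 (t : Finset ℕ) (n : ℕ) :
    (barMultisetF t).count n = hookCount t n + pairCount t n := by
  have hshorten (a : ℕ) (ha : a ∈ t) :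
      (((Multiset.range a).map (· + 1)).filter (fun h => a - h ∉ t)).count n =
        if n ≤ a ∧ a - n ∉ t then 1 else 0 := by
    rw [Multiset.count_eq_of_nodup (((Multiset.nodup_range a).map (add_left_injective 1)).filter _)]
    refine if_congr ?_ rfl rfl
    simp only [Multiset.mem_filter, Multiset.mem_map, Multiset.mem_range]
    constructor
    · rintro ⟨⟨h, hh, rfl⟩, hnot⟩
      exact ⟨hh, hnot⟩
    · rintro ⟨hna, hnot⟩
      have hn : n ≠ 0 := by rintro rfl; exact hnot ha
      exact ⟨⟨n - 1, by omega, by omega⟩, hnot⟩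
  have hjoin (a : ℕ) : ({b ∈ t | b < a}.val.map (a + ·)).count n =
      if a ≤ n ∧ n - a < a ∧ n - a ∈ t then 1 else 0 := by
    rw [Multiset.count_eq_of_nodup ((nodup _).map (add_right_injective a))]
    refine if_congr ?_ rfl rfl
    simp only [Multiset.mem_map, mem_val, mem_filter]
    constructor
    · rintro ⟨b, ⟨hb, hba⟩, rfl⟩
      rw [Nat.add_sub_cancel_left]
      exact ⟨Nat.le_add_right a b, hba, hb⟩
    · rintro ⟨han, hlt, hmem⟩
      exact ⟨n - a, ⟨hmem, hlt⟩, Nat.add_sub_cancel' han⟩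
  rw [barMultisetF, Multiset.count_add, Multiset.count_bind, Multiset.count_bind, hookCount,
    pairCount, card_filter, card_filter]
  exact congrArg₂ (· + ·) (sum_congr rfl hshorten) (sum_congr rfl fun a _ => hjoin a)

lemma sum_range_eq_add_sum_pairs {M : Type*} [AddCommMonoid M] {d : ℕ} (hd : Odd d)
    (F : ℕ → M) :
    ∑ i ∈ range d, F i = F 0 + ∑ i ∈ range ((d - 1) / 2), (F (i + 1) + F (d - (i + 1))) := by
  obtain ⟨m, rfl⟩ := hd
  have hreflect : ∑ i ∈ range m, F (m + i + 1) = ∑ i ∈ range m, F (2 * m + 1 - (i + 1)) := by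
    rw [← sum_range_reflect]
    exact sum_congr rfl fun i hi => by rw [mem_range] at hi; congr 1; omega
  rw [sum_range_succ', add_comm, two_mul, sum_range_add, show (m + m + 1 - 1) / 2 = m by omega,
    sum_add_distrib, hreflect, two_mul]

section Runners

variable {d i k m : ℕ} {t : Finset ℕ}

lemma mem_runnerSet (hi : i < d) : k ∈ runnerSet d i t ↔ d * k + i ∈ t := by
  simp only [runnerSet, mem_image, mem_filter]
  constructor
  · rintro ⟨a, ⟨ha, rfl⟩, rfl⟩
    rwa [Nat.div_add_mod]
  · intro h
    refine ⟨d * k + i, ⟨h, ?_⟩, ?_⟩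
    · rw [Nat.mul_add_mod, Nat.mod_eq_of_lt hi]
    · rw [Nat.mul_add_div (by omega), Nat.div_eq_of_lt hi, add_zero]

lemma card_filter_eq_sum_runnerSet (hd : 0 < d) (t : Finset ℕ) (p : ℕ → Prop) [DecidablePred p] :
    #{a ∈ t | p a} = ∑ i ∈ range d, #{k ∈ runnerSet d i t | p (d * k + i)} := by
  rw [card_eq_sum_card_fiberwise fun a _ => mem_range.2 (Nat.mod_lt a hd)]
  refine sum_congr rfl fun i hi => ?_
  have hfiber : {a ∈ {a ∈ t | p a} | a % d = i} =
      {k ∈ runnerSet d i t | p (d * k + i)}.image (d * · + i) := by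
    ext a
    simp only [mem_filter, mem_image, mem_runnerSet (mem_range.1 hi)]
    constructor
    · rintro ⟨⟨ha, hp⟩, rfl⟩
      exact ⟨a / d, by rw [Nat.div_add_mod]; exact ⟨ha, hp⟩, Nat.div_add_mod a d⟩
    · rintro ⟨k, hk, rfl⟩
      exact ⟨hk, by rw [Nat.mul_add_mod, Nat.mod_eq_of_lt (mem_range.1 hi)]⟩
  rw [hfiber, card_image_of_injective _ fun k l h =>
    Nat.eq_of_mul_eq_mul_left hd (Nat.add_right_cancel h)]

lemma mul_le_mul_add_iff (hi : i < d) : d * m ≤ d * k + i ↔ m ≤ k :=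
  ⟨fun _ => by by_contra! _; nlinarith, fun _ => by nlinarith⟩

lemma mul_add_le_mul_iff (hi0 : 0 < i) (hi : i ≤ d) : d * k + i ≤ d * m ↔ k < m :=
  ⟨fun _ => by by_contra! _; nlinarith, fun _ => by nlinarith⟩

lemma mul_add_sub_mul (h : m ≤ k) : d * k + i - d * m = d * (k - m) + i := by
  rw [Nat.mul_sub]
  have := Nat.mul_le_mul_left d h
  omega

lemma mul_sub_mul_add (hi : i ≤ d) (h : k < m) :
    d * m - (d * k + i) = d * (m - 1 - k) + (d - i) := by
  obtain ⟨e, rfl⟩ : ∃ e, m = k + 1 + e := ⟨m - k - 1, by omega⟩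
  rw [show k + 1 + e - 1 - k = e by omega, Nat.mul_add, Nat.mul_add, mul_one]
  omega

lemma hookCount_runnerSet (hi : i < d) (t : Finset ℕ) (m : ℕ) :
    #{k ∈ runnerSet d i t | d * m ≤ d * k + i ∧ d * k + i - d * m ∉ t} =
      hookCount (runnerSet d i t) m := by
  refine congrArg card (filter_congr fun k _ => ?_)
  rw [mul_le_mul_add_iff hi]
  exact and_congr_right fun hmk => by rw [mul_add_sub_mul hmk, mem_runnerSet hi]

lemma pairCount_runnerSet_zero (hd : 0 < d) (t : Finset ℕ) (m : ℕ) :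
    #{k ∈ runnerSet d 0 t |
        d * k + 0 ≤ d * m ∧ d * m - (d * k + 0) < d * k + 0 ∧ d * m - (d * k + 0) ∈ t} =
      pairCount (runnerSet d 0 t) m := by
  refine congrArg card (filter_congr fun k _ => ?_)
  rw [mem_runnerSet hd, add_zero, add_zero, ← Nat.mul_sub, Nat.mul_le_mul_left_iff hd,
    Nat.mul_lt_mul_left hd]

lemma pair_iff_cross (hi0 : 0 < i) (hi : i < d) :
    (d * k + i ≤ d * m ∧ d * m - (d * k + i) < d * k + i ∧ d * m - (d * k + i) ∈ t) ↔
      (k < m ∧ m - 1 - k ∈ runnerSet d (d - i) t) ∧ d * (m - 1 - k) + (d - i) < d * k + i := by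
  rw [mul_add_le_mul_iff hi0 hi.le]
  by_cases hkm : k < m
  · rw [mul_sub_mul_add hi.le hkm, mem_runnerSet (by omega : d - i < d)]
    tauto
  · simp [hkm]

lemma card_filter_cross_comm (A B : Finset ℕ) (m : ℕ) (p : ℕ → ℕ → Prop) [DecidableRel p] :
    #{l ∈ B | (l < m ∧ m - 1 - l ∈ A) ∧ p (m - 1 - l) l} =
      #{k ∈ A | (k < m ∧ m - 1 - k ∈ B) ∧ p k (m - 1 - k)} := by
  refine card_nbij' (m - 1 - ·) (m - 1 - ·) ?_ ?_ ?_ ?_ <;>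
    simp only [mem_coe, mem_filter, Set.MapsTo, Set.LeftInvOn] <;>
    intro x ⟨hx, ⟨hxm, hx'⟩, hp⟩
  · rw [show m - 1 - (m - 1 - x) = x by omega]
    exact ⟨hx', ⟨by omega, hx⟩, hp⟩
  · rw [show m - 1 - (m - 1 - x) = x by omega]
    exact ⟨hx', ⟨by omega, hx⟩, hp⟩
  · omega
  · omega

theorem pairCount_runnerSet_add (hd : Odd d) (hi0 : 0 < i) (hi : i < d) (t : Finset ℕ) (m : ℕ) :
    #{k ∈ runnerSet d i t |
        d * k + i ≤ d * m ∧ d * m - (d * k + i) < d * k + i ∧ d * m - (d * k + i) ∈ t} +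
      #{k ∈ runnerSet d (d - i) t | d * k + (d - i) ≤ d * m ∧
        d * m - (d * k + (d - i)) < d * k + (d - i) ∧ d * m - (d * k + (d - i)) ∈ t} =
      crossCount (runnerSet d i t) (runnerSet d (d - i) t) m := by
  have hcomm := card_filter_cross_comm (runnerSet d i t) (runnerSet d (d - i) t) m
    fun k l => d * k + i < d * l + (d - i)
  have hne (k l : ℕ) : d * k + i ≠ d * l + (d - i) := fun h => by
    have := congrArg (· % d) h
    simp only [Nat.mul_add_mod, Nat.mod_eq_of_lt hi, Nat.mod_eq_of_lt (by omega : d - i < d)]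
      at this
    obtain ⟨r, rfl⟩ := hd
    omega
  rw [filter_congr fun k _ => pair_iff_cross hi0 hi,
    filter_congr fun k _ => pair_iff_cross (by omega : 0 < d - i) (by omega : d - i < d),
    Nat.sub_sub_self hi.le, hcomm, crossCount,
    ← card_filter_add_card_filter_not
      (s := {k ∈ runnerSet d i t | k < m ∧ m - 1 - k ∈ runnerSet d (d - i) t})
      (p := fun k => d * (m - 1 - k) + (d - i) < d * k + i), filter_filter, filter_filter]
  refine congrArg _ (congrArg card (filter_congr fun k _ => and_congr_right fun _ => ?_))
  have := hne k (m - 1 - k)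
  omega

end Runners

lemma lt_sup_id_add_one {B : Finset ℕ} {b : ℕ} (hb : b ∈ B) : b < B.sup id + 1 :=
  Nat.lt_succ_of_le (le_sup (f := id) hb)

theorem count_barMultisetF_mul {d : ℕ} (hd : Odd d) (t : Finset ℕ) (m : ℕ) :
    (barMultisetF t).count (d * m) =
      hookCount (runnerSet d 0 t) m + pairCount (runnerSet d 0 t) m +
        ∑ i ∈ range ((d - 1) / 2),
          hookCount (pairBetaSet ((runnerSet d (d - (i + 1)) t).sup id + 1)
            (runnerSet d (i + 1) t) (runnerSet d (d - (i + 1)) t)) m := by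
  have hd0 : 0 < d := hd.pos
  rw [count_barMultisetF_s9, hookCount, pairCount, card_filter_eq_sum_runnerSet hd0,
    card_filter_eq_sum_runnerSet hd0, ← sum_add_distrib, sum_range_eq_add_sum_pairs hd,
    hookCount_runnerSet hd0, pairCount_runnerSet_zero hd0]
  refine congrArg _ (sum_congr rfl fun i hi => ?_)
  have := mem_range.1 hi
  rw [hookCount_runnerSet (by omega), hookCount_runnerSet (by omega), add_add_add_comm,
    pairCount_runnerSet_add hd (by omega) (by omega),
    hookCount_pairBetaSet fun _ => lt_sup_id_add_one, add_right_comm]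

theorem divisible_bars_eq_general (d : ℕ) (hd : Odd d) (s q : Finset ℕ)
    (hq : IsBarQuotientPartition d s q) :
    (barMultisetF s).filter (fun b => d ∣ b) = (barMultisetF q).filter (fun b => d ∣ b) := by
  obtain ⟨-, hrunner0, hquot⟩ := hq
  ext n
  rw [Multiset.count_filter, Multiset.count_filter]
  split_ifs with hdn
  · obtain ⟨m, rfl⟩ := hdn
    rw [count_barMultisetF_mul hd, count_barMultisetF_mul hd, hrunner0]
    refine congrArg _ (sum_congr rfl fun i hi => hookCount_eq_of_partitionOfBetaSet_eq ?_ m)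
    have := mem_range.1 hi
    rw [← barQuotComp_eq, ← barQuotComp_eq]
    exact hquot (i + 1) (by omega) (by omega)
  · rfl

/-- the multisets of bar lengths divisible by `d` of `λ` and of its
`d̄`-quotient partition coincide (hence so do their cardinalities). -/
theorem divisible_bars_eq (d : ℕ) (hd : Odd d) (h3 : 3 ≤ d) (s q : Finset ℕ)
    (hs : 0 ∉ s) (hq : IsBarQuotientPartition d s q) :
    (barMultisetF s).filter (fun b => d ∣ b) = (barMultisetF q).filter (fun b => d ∣ b) :=
  divisible_bars_eq_general d hd s q hq

end BarPartitions
end
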